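/- arXiv:2605.16959 — 4 statements merged into one kernel-verified Lean document; each statement's English description precedes it below -/
import Mathlib

section
/- The automata (V, E) and (U, F) are isomorphic via the bijection n: (i) n(v_init) = ⟨0, …, 0⟩ where v_init = 0^m 1^{k−m}; (ii) for all v, v′ ∈ V and σ ∈ {0,1}, (v, σ, v′) ∈ E if and only if (n(v), σ, n(v′)) ∈ F. -/
/-- The list of positions (1-indexed from the right, i.e. position 1 = index 0)
of the zeros of the word `v`, sorted increasingly. -/
def zeroPositions (k : ℕ) (v : Fin k → Bool) : List ℕ :=
  ((Finset.univ.filter (fun j : Fin k => v j = false)).sort (· ≤ ·)).map (fun j => (j : ℕ) + 1)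

/-- `gfun k v i` is the position of the `i`-th zero of `v` counted from the right
(`i` is 1-indexed). -/
def gfun (k : ℕ) (v : Fin k → Bool) (i : ℕ) : ℕ := (zeroPositions k v).getD (i - 1) 0

/-- `Vset k m` : binary words of length `k` with exactly `m` zeros. -/
def Vset (k m : ℕ) : Set (Fin k → Bool) :=
  {v | (Finset.univ.filter (fun j : Fin k => v j = false)).card = m}

/-- `Uset k m` : nonincreasing `m`-tuples with entries in `{0, …, k-m}`. -/
def Uset (k m : ℕ) : Set (Fin m → ℕ) :=
  {u | (∀ i, u i ≤ k - m) ∧ ∀ i j : Fin m, i ≤ j → u j ≤ u i}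

/-- The map `n : V → U`, `n(v)_i = k - m + i - g(v, i)` (here `i` runs over `Fin m`,
representing the 1-indexed coordinate `i+1`). -/
def nMap (k m : ℕ) (v : Fin k → Bool) : Fin m → ℕ :=
  fun i => k - m + ((i : ℕ) + 1) - gfun k v ((i : ℕ) + 1)

/-- `shiftRel k v σ v' p` : the word `v'` consists of `p` zeros in the highest
positions, followed by the `k - p - 1` lowest characters of `v`, followed by `σ`
in position 1.  Here index `i : Fin k` encodes position `i + 1` (position 1 is
the rightmost character) and the bit `0` is `false`, `1` is `true`. -/
def shiftRel (k : ℕ) (v : Fin k → Bool) (σ : Bool) (v' : Fin k → Bool) (p : ℕ) : Prop :=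
  ∀ i : Fin k, v' i =
    if (i : ℕ) = 0 then σ
    else if (i : ℕ) ≤ k - p - 1 then v ⟨(i : ℕ) - 1, lt_of_le_of_lt (Nat.sub_le _ _) i.isLt⟩
    else false

/-- Membership in the transition set `E` of the automaton `(V, E)`. -/
def Erel (k m : ℕ) (v : Fin k → Bool) (σ : Bool) (v' : Fin k → Bool) : Prop :=
  ∃ p ≤ m, shiftRel k v σ v' p

/-- The target of the `1`-transition: `⟨max(u₁-1,0), …, max(u_m-1,0)⟩`. -/
def oneStep (m : ℕ) (u : Fin m → ℕ) : Fin m → ℕ := fun i => u i - 1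

/-- The target of the `0`-transition: `⟨k-m, u₁, …, u_{m-1}⟩`. -/
def zeroStep (k m : ℕ) (u : Fin m → ℕ) : Fin m → ℕ :=
  fun i => if (i : ℕ) = 0 then k - m
    else u ⟨(i : ℕ) - 1, lt_of_le_of_lt (Nat.sub_le _ _) i.isLt⟩

/-- Membership in the transition set `F` of the automaton `(U, F)`. -/
def Frel (k m : ℕ) (hm : 0 < m) (u : Fin m → ℕ) (σ : Bool) (u' : Fin m → ℕ) : Prop :=
  u ∈ Uset k m ∧
  ((σ = true ∧ u' = oneStep m u) ∨
   (σ = false ∧ u ⟨m - 1, Nat.sub_lt hm Nat.one_pos⟩ = 0 ∧ u' = zeroStep k m u))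

namespace AutIso

def IsEnum (k m : ℕ) (v : Fin k → Bool) (g : Fin m → ℕ) : Prop :=
  StrictMono g ∧ (∀ i, ∃ h : g i < k, v ⟨g i, h⟩ = false) ∧
    ∀ j : Fin k, v j = false → ∃ i, g i = (j : ℕ)

variable {k m : ℕ} {v v' : Fin k → Bool} {g g' : Fin m → ℕ}

lemma zp_eq (k : ℕ) (v : Fin k → Bool) : zeroPositions k v =
    ((Finset.univ.filter (fun j : Fin k => v j = false)).sort (· ≤ ·)).map
      (fun j : Fin k => (j : ℕ) + 1) := by
  show List.map _ (_ >>= _) = _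
  rw [List.bind_eq_flatMap, show (fun a : Fin k => pure (a : ℕ)) = pure ∘ Fin.val from rfl,
    List.flatMap_pure_eq_map, List.map_map]
  rfl

lemma gfun_eq (hv : (Finset.univ.filter (fun j : Fin k => v j = false)).card = m) (i : Fin m) :
    gfun k v ((i : ℕ) + 1) =
      ((Finset.univ.filter (fun j : Fin k => v j = false)).orderEmbOfFin hv i : ℕ) + 1 := by
  have h1 : (i : ℕ) < (((Finset.univ.filter (fun j : Fin k => v j = false)).sort (· ≤ ·)).map
      (fun j : Fin k => (j : ℕ) + 1)).length := by
    rw [List.length_map, Finset.length_sort, hv]; exact i.isLt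
  rw [gfun, zp_eq, Nat.add_sub_cancel, List.getD_eq_getElem _ _ h1, List.getElem_map,
    Finset.orderEmbOfFin_apply]
  rfl

lemma isEnum_canonical (hv : (Finset.univ.filter (fun j : Fin k => v j = false)).card = m) :
    IsEnum k m v (fun i =>
      ((Finset.univ.filter (fun j : Fin k => v j = false)).orderEmbOfFin hv i : ℕ)) := by
  refine ⟨?_, ?_, ?_⟩
  · intro a b hab
    exact (Finset.orderEmbOfFin _ hv).strictMono hab
  · intro i
    have h := Finset.orderEmbOfFin_mem _ hv i
    rw [Finset.mem_filter] at h
    exact ⟨((Finset.univ.filter (fun j : Fin k => v j = false)).orderEmbOfFin hv i).isLt,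
      by simpa using h.2⟩
  · intro j hj
    have hmem : j ∈ Finset.univ.filter (fun j : Fin k => v j = false) := by simp [hj]
    obtain ⟨i, hi⟩ := Finset.range_orderEmbOfFin _ hv ▸ (Finset.mem_coe.2 hmem)
    exact ⟨i, congrArg Fin.val hi⟩

lemma eq_canonical (hv : (Finset.univ.filter (fun j : Fin k => v j = false)).card = m)
    (hmono : StrictMono g) (hmem : ∀ i, ∃ h : g i < k, v ⟨g i, h⟩ = false) :
    ∀ i, g i = ((Finset.univ.filter (fun j : Fin k => v j = false)).orderEmbOfFin hv i : ℕ) := by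
  have h := Finset.orderEmbOfFin_unique hv (f := fun i => (⟨g i, (hmem i).1⟩ : Fin k))
    (fun i => by simp [(hmem i).2]) (fun a b hab => by
      rw [Fin.mk_lt_mk]; exact hmono hab)
  intro i
  exact congrArg Fin.val (congrFun h i)

lemma isEnum_of (hv : (Finset.univ.filter (fun j : Fin k => v j = false)).card = m)
    (hmono : StrictMono g) (hmem : ∀ i, ∃ h : g i < k, v ⟨g i, h⟩ = false) :
    IsEnum k m v g := by
  rw [show g = _ from funext (eq_canonical hv hmono hmem)]
  exact isEnum_canonical hv

lemma nMap_enum (hv : (Finset.univ.filter (fun j : Fin k => v j = false)).card = m)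
    (hmono : StrictMono g) (hmem : ∀ i, ∃ h : g i < k, v ⟨g i, h⟩ = false) (i : Fin m) :
    nMap k m v i = k - m + (i : ℕ) - g i := by
  rw [nMap, gfun_eq hv i, eq_canonical hv hmono hmem i]; omega

lemma enum_gap_aux (hg : StrictMono g) :
    ∀ d (i : Fin m) (h : (i : ℕ) + d < m), g i + d ≤ g ⟨(i : ℕ) + d, h⟩ := by
  intro d
  induction d with
  | zero =>
    intro i h
    have he : (⟨(i : ℕ) + 0, h⟩ : Fin m) = i := Fin.ext (by simp)
    rw [he]; omega
  | succ d IH =>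
    intro i h
    have h' : (i : ℕ) + d < m := by omega
    have h1 := IH i h'
    have h2 : g ⟨(i : ℕ) + d, h'⟩ < g ⟨(i : ℕ) + (d + 1), h⟩ := hg (by rw [Fin.lt_def]; simp)
    omega

lemma enum_gap (hg : StrictMono g) (i j : Fin m) (hij : (i : ℕ) ≤ j) :
    g i + ((j : ℕ) - (i : ℕ)) ≤ g j := by
  have h : (i : ℕ) + ((j : ℕ) - (i : ℕ)) < m := by have := j.isLt; omega
  have h1 := enum_gap_aux hg ((j : ℕ) - (i : ℕ)) i h
  have he : (⟨(i : ℕ) + ((j : ℕ) - (i : ℕ)), h⟩ : Fin m) = j := Fin.ext (by simp; omega)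
  rw [he] at h1
  exact h1

lemma enum_lt (hg : IsEnum k m v g) (i : Fin m) : g i < k := (hg.2.1 i).1

lemma enum_le (hg : IsEnum k m v g) (hmk : m ≤ k) (i : Fin m) : g i ≤ k - m + (i : ℕ) := by
  have hm : 0 < m := i.pos
  have h1 := enum_gap hg.1 i ⟨m - 1, by omega⟩ (by simp; omega)
  have h2 := enum_lt hg ⟨m - 1, by omega⟩
  simp at h1
  have h3 := i.isLt
  omega

lemma enum_ge (hg : IsEnum k m v g) (i : Fin m) : (i : ℕ) ≤ g i := by
  have hm : 0 < m := i.pos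
  have h1 := enum_gap hg.1 ⟨0, hm⟩ i (by simp)
  simp at h1
  omega

lemma enum_char (hg : IsEnum k m v g) (j : Fin k) : v j = false ↔ ∃ i, g i = (j : ℕ) := by
  constructor
  · exact hg.2.2 j
  · rintro ⟨i, hi⟩
    have h := (hg.2.1 i).2
    have heq : (⟨g i, (hg.2.1 i).1⟩ : Fin k) = j := Fin.ext hi
    rwa [heq] at h

end AutIso

namespace AutIso

variable {k m p : ℕ} {v v' : Fin k → Bool} {σ : Bool} {g g' : Fin m → ℕ}

lemma val_lt_of_g_lt (hmono : StrictMono g) {a b : Fin m} (h : g a < g b) :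
    (a : ℕ) < (b : ℕ) := by
  by_contra hc
  push_neg at hc
  have hba : b ≤ a := by rw [Fin.le_def]; exact hc
  have := hmono.le_iff_le.2 hba
  omega

/-- the top `p` indices `k-p, …, k-1` of `v'` are zeros, and enumerated last. -/
lemma claim_top (hmk : m < k) (hp : p ≤ m)
    (hg' : IsEnum k m v' g') (hsh : shiftRel k v σ v' p) :
    ∀ j, j < p → ∀ hj : m - 1 - j < m, g' ⟨m - 1 - j, hj⟩ = k - 1 - j := by
  intro j
  induction j using Nat.strong_induction_on with
  | _ j IH =>
    intro hjp hj
    have hm : 0 < m := by omega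
    have hidx : k - 1 - j < k := by omega
    have hz : v' ⟨k - 1 - j, hidx⟩ = false := by
      rw [hsh ⟨k - 1 - j, hidx⟩]
      rw [if_neg (by simp; omega), if_neg (by simp; omega)]
    obtain ⟨i, hi⟩ := hg'.2.2 _ hz
    simp only at hi
    have hile : g' i ≤ k - m + (i : ℕ) := enum_le hg' (by omega) i
    have hge : m - 1 - j ≤ (i : ℕ) := by omega
    rcases Nat.eq_or_lt_of_le hge with heq | hlt
    · have : (⟨m - 1 - j, hj⟩ : Fin m) = i := Fin.ext heq
      rw [this, hi]
    · -- i > m - 1 - j, contradiction via IH at j' = m - 1 - i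
      exfalso
      have hj' : m - 1 - (i : ℕ) < j := by have := i.isLt; omega
      have hj'm : m - 1 - (m - 1 - (i : ℕ)) < m := by omega
      have h2 := IH (m - 1 - (i : ℕ)) hj' (by omega) hj'm
      have he : (⟨m - 1 - (m - 1 - (i : ℕ)), hj'm⟩ : Fin m) = i :=
        Fin.ext (by simp; have := i.isLt; omega)
      rw [he] at h2
      have := i.isLt
      omega

lemma claim2 (hmk : m < k) (hp : p ≤ m)
    (hg' : IsEnum k m v' g') (hsh : shiftRel k v σ v' p) :
    ∀ i : Fin m, (i : ℕ) < m - p → g' i ≤ k - p - 1 := by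
  intro i hi
  rcases Nat.eq_zero_or_pos p with hp0 | hp1
  · have := enum_lt hg' i; omega
  · have hjm : m - 1 - (p - 1) < m := by omega
    have h1 := claim_top hmk hp hg' hsh (p - 1) (by omega) hjm
    have h2 : g' i < g' ⟨m - 1 - (p - 1), hjm⟩ := hg'.1 (by rw [Fin.lt_def]; simp; omega)
    omega

lemma low_pull (o : ℕ) (hmk : m < k) (hp : p ≤ m)
    (hg : IsEnum k m v g) (hg' : IsEnum k m v' g') (hsh : shiftRel k v σ v' p)
    (hpos : ∀ i : Fin m, o ≤ (i : ℕ) → (i : ℕ) < m - p → 1 ≤ g' i) :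
    ∀ n, o ≤ n → ∀ hnm : n < m, n < m - p →
      ∃ l : Fin m, n - o ≤ (l : ℕ) ∧ g l = g' ⟨n, hnm⟩ - 1 := by
  intro n
  induction n using Nat.strong_induction_on with
  | _ n IH =>
    intro hon hnm hnmp
    have h1 : 1 ≤ g' ⟨n, hnm⟩ := hpos ⟨n, hnm⟩ hon hnmp
    have h2 : g' ⟨n, hnm⟩ ≤ k - p - 1 := claim2 hmk hp hg' hsh ⟨n, hnm⟩ hnmp
    have hidx : g' ⟨n, hnm⟩ < k := enum_lt hg' _
    have hz : v' ⟨g' ⟨n, hnm⟩, hidx⟩ = false := (hg'.2.1 ⟨n, hnm⟩).2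
    rw [hsh ⟨g' ⟨n, hnm⟩, hidx⟩] at hz
    rw [if_neg (by simp; omega), if_pos (by simpa using h2)] at hz
    obtain ⟨l, hl⟩ := hg.2.2 _ hz
    simp only at hl
    refine ⟨l, ?_, hl⟩
    rcases Nat.eq_or_lt_of_le hon with heq | hlt
    · omega
    · -- n ≥ o + 1 : use IH at n - 1
      obtain ⟨l', hl'1, hl'2⟩ := IH (n - 1) (by omega) (by omega) (by omega) (by omega)
      have hgg : g' ⟨n - 1, by omega⟩ < g' ⟨n, hnm⟩ := hg'.1 (by rw [Fin.lt_def]; simp; omega)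
      have h1' : 1 ≤ g' ⟨n - 1, by omega⟩ := hpos _ (by simp; omega) (by simp; omega)
      have hgl : g l' < g l := by omega
      have hvl : (l' : ℕ) < (l : ℕ) := val_lt_of_g_lt hg.1 hgl
      omega

lemma claim5 (o : ℕ) (hmk : m < k) (hp : p ≤ m)
    (hg : IsEnum k m v g) (hg' : IsEnum k m v' g') (hsh : shiftRel k v σ v' p)
    (hpos : ∀ i : Fin m, o ≤ (i : ℕ) → (i : ℕ) < m - p → 1 ≤ g' i) :
    ∀ l : Fin m, (l : ℕ) + o < m - p → g l ≤ k - p - 2 := by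
  intro l0 hl0
  by_contra hcon
  push_neg at hcon
  obtain ⟨l, hl1, hl2⟩ := low_pull o hmk hp hg hg' hsh hpos (m - p - 1) (by omega)
    (by omega) (by omega)
  have h2 : g' ⟨m - p - 1, by omega⟩ ≤ k - p - 1 := claim2 hmk hp hg' hsh _ (by simp; omega)
  have hgl : g l < g l0 := by omega
  have hvl : (l : ℕ) < (l0 : ℕ) := val_lt_of_g_lt hg.1 hgl
  omega

lemma push (o : ℕ) (hmk : m < k) (hp : p ≤ m) (hkp : 2 ≤ k - p)
    (hg : IsEnum k m v g) (hg' : IsEnum k m v' g') (hsh : shiftRel k v σ v' p)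
    (hzero : ∀ i : Fin m, (i : ℕ) < o → g' i = 0) :
    ∀ l : Fin m, g l ≤ k - p - 2 →
      ∃ i : Fin m, o ≤ (i : ℕ) ∧ (i : ℕ) < m - p ∧ g' i = g l + 1 := by
  intro l hl
  have hm : 0 < m := l.pos
  have hidx : g l + 1 < k := by omega
  have hz : v' ⟨g l + 1, hidx⟩ = false := by
    have hcond1 : ¬(((⟨g l + 1, hidx⟩ : Fin k) : ℕ) = 0) := by simp
    have hcond2 : ((⟨g l + 1, hidx⟩ : Fin k) : ℕ) ≤ k - p - 1 := by
      show g l + 1 ≤ k - p - 1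
      omega
    rw [hsh ⟨g l + 1, hidx⟩, if_neg hcond1, if_pos hcond2]
    have h := (hg.2.1 l).2
    have he : (⟨g l + 1 - 1, by omega⟩ : Fin k) = ⟨g l, (hg.2.1 l).1⟩ := Fin.ext (by simp)
    rw [he]
    exact h
  obtain ⟨i, hi⟩ := hg'.2.2 _ hz
  simp only at hi
  refine ⟨i, ?_, ?_, hi⟩
  · -- o ≤ i
    by_contra hc
    push_neg at hc
    have := hzero i hc
    omega
  · -- i < m - p
    rcases Nat.eq_zero_or_pos p with hp0 | hp1
    · have := i.isLt; omega
    · have hjm : m - 1 - (p - 1) < m := by omega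
      have h1 := claim_top hmk hp hg' hsh (p - 1) (by omega) hjm
      have hlt : g' i < g' ⟨m - 1 - (p - 1), hjm⟩ := by rw [h1]; omega
      have hvl : (i : ℕ) < m - 1 - (p - 1) := val_lt_of_g_lt hg'.1 hlt
      omega

lemma claim7 (o : ℕ) (hmk : m < k) (hp : p ≤ m)
    (hg : IsEnum k m v g) (hg' : IsEnum k m v' g') (hsh : shiftRel k v σ v' p)
    (hzero : ∀ i : Fin m, (i : ℕ) < o → g' i = 0) :
    ∀ h0 : m - p - o < m, k - p - 1 ≤ g ⟨m - p - o, h0⟩ := by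
  intro h0
  rcases Nat.lt_or_ge (k - p) 2 with hkp | hkp
  · omega
  by_contra hcon
  push_neg at hcon
  have key : ∀ n, ∀ hnm : n < m, n ≤ m - p - o →
      ∃ i : Fin m, n + o ≤ (i : ℕ) ∧ (i : ℕ) < m - p ∧ g' i = g ⟨n, hnm⟩ + 1 := by
    intro n
    induction n with
    | zero =>
      intro hnm hn
      have hle : g ⟨0, hnm⟩ ≤ k - p - 2 := by
        have h2 := hg.1.le_iff_le.2 (show (⟨0, hnm⟩ : Fin m) ≤ ⟨m - p - o, h0⟩ from by
          rw [Fin.le_def]; simp)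
        omega
      obtain ⟨i, h1, h2, h3⟩ := push o hmk hp hkp hg hg' hsh hzero _ hle
      exact ⟨i, by omega, h2, h3⟩
    | succ n IH =>
      intro hnm hn
      have hnm' : n < m := by omega
      obtain ⟨ip, hip1, hip2, hip3⟩ := IH hnm' (by omega)
      have hle : g ⟨n + 1, hnm⟩ ≤ k - p - 2 := by
        have h2 := hg.1.le_iff_le.2 (show (⟨n + 1, hnm⟩ : Fin m) ≤ ⟨m - p - o, h0⟩ from by
          rw [Fin.le_def]; simp; omega)
        omega
      obtain ⟨i, h1, h2, h3⟩ := push o hmk hp hkp hg hg' hsh hzero _ hle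
      refine ⟨i, ?_, h2, h3⟩
      have hgg : g ⟨n, hnm'⟩ < g ⟨n + 1, hnm⟩ := hg.1 (by rw [Fin.lt_def]; simp)
      have hgi : g' ip < g' i := by omega
      have hvl := val_lt_of_g_lt hg'.1 hgi
      omega
  obtain ⟨i, h1, h2, _⟩ := key (m - p - o) h0 le_rfl
  omega

end AutIso

namespace AutIso

variable {k m p : ℕ} {v v' : Fin k → Bool} {σ : Bool} {g g' : Fin m → ℕ}

lemma pos_of_sigma_true (hk : 0 < k) (hg' : IsEnum k m v' g')
    (hsh : shiftRel k v true v' p) : ∀ i : Fin m, 1 ≤ g' i := by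
  intro i
  by_contra hc
  push_neg at hc
  have h0 : v' ⟨0, hk⟩ = true := by rw [hsh ⟨0, hk⟩]; simp
  have h1 : v' ⟨0, hk⟩ = false := (enum_char hg' ⟨0, hk⟩).2 ⟨i, show g' i = 0 by omega⟩
  rw [h0] at h1
  exact Bool.noConfusion h1

lemma zero_of_sigma_false (hk : 0 < k) (hm : 0 < m) (hg' : IsEnum k m v' g')
    (hsh : shiftRel k v false v' p) : ∀ i : Fin m, (i : ℕ) < 1 → g' i = 0 := by
  intro i hi
  have h0 : v' ⟨0, hk⟩ = false := by rw [hsh ⟨0, hk⟩]; simp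
  obtain ⟨i0, hi0⟩ := hg'.2.2 _ h0
  have hi0' : g' i0 = 0 := hi0
  have hle : g' i ≤ g' i0 := hg'.1.le_iff_le.2 (by rw [Fin.le_def]; omega)
  omega

/-- Forward direction, `σ = true`. -/
lemma forward_true (hm : 0 < m) (hmk : m < k) (hp : p ≤ m)
    (hv : (Finset.univ.filter (fun j : Fin k => v j = false)).card = m)
    (hv' : (Finset.univ.filter (fun j : Fin k => v' j = false)).card = m)
    (hsh : shiftRel k v true v' p) :
    ∀ i : Fin m, nMap k m v' i = nMap k m v i - 1 := by
  set g : Fin m → ℕ := fun i =>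
    ((Finset.univ.filter (fun j : Fin k => v j = false)).orderEmbOfFin hv i : ℕ) with hgdef
  set g' : Fin m → ℕ := fun i =>
    ((Finset.univ.filter (fun j : Fin k => v' j = false)).orderEmbOfFin hv' i : ℕ) with hg'def
  have hg : IsEnum k m v g := isEnum_canonical hv
  have hg' : IsEnum k m v' g' := isEnum_canonical hv'
  have hpos : ∀ i : Fin m, 0 ≤ (i : ℕ) → (i : ℕ) < m - p → 1 ≤ g' i :=
    fun i _ _ => pos_of_sigma_true (by omega) hg' hsh i
  have hcut : ∀ l : Fin m, (l : ℕ) < m - p → g l ≤ k - p - 2 := by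
    intro l hl
    exact claim5 0 hmk hp hg hg' hsh hpos l (by omega)
  set f : Fin m → ℕ := fun i =>
    if (i : ℕ) < m - p then g i + 1 else k - m + (i : ℕ) with hfdef
  have hfval1 : ∀ i : Fin m, (i : ℕ) < m - p → f i = g i + 1 := by
    intro i hi; simp only [hfdef]; rw [if_pos hi]
  have hfval2 : ∀ i : Fin m, ¬((i : ℕ) < m - p) → f i = k - m + (i : ℕ) := by
    intro i hi; simp only [hfdef]; rw [if_neg hi]
  have hflt : ∀ i : Fin m, f i < k := by
    intro i
    by_cases hi : (i : ℕ) < m - p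
    · have := hcut i hi; rw [hfval1 i hi]; omega
    · have := i.isLt; rw [hfval2 i hi]; omega
  have hfmono : StrictMono f := by
    intro a b hab
    have habv : (a : ℕ) < (b : ℕ) := hab
    have hbv := b.isLt
    by_cases ha : (a : ℕ) < m - p
    · rw [hfval1 a ha]
      by_cases hb : (b : ℕ) < m - p
      · rw [hfval1 b hb]; have := hg.1 hab; omega
      · rw [hfval2 b hb]; have := hcut a ha; omega
    · have hb : ¬((b : ℕ) < m - p) := by omega
      rw [hfval2 a ha, hfval2 b hb]; omega
  have hfmem : ∀ i : Fin m, ∃ h : f i < k, v' ⟨f i, h⟩ = false := by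
    intro i
    refine ⟨hflt i, ?_⟩
    rw [hsh ⟨f i, hflt i⟩]
    by_cases hi : (i : ℕ) < m - p
    · have hfi := hfval1 i hi
      have hc := hcut i hi
      rw [if_neg (show ¬(f i = 0) by omega), if_pos (show f i ≤ k - p - 1 by omega)]
      have h := (hg.2.1 i).2
      have he : (⟨f i - 1, by have := hflt i; omega⟩ : Fin k)
          = ⟨g i, (hg.2.1 i).1⟩ := Fin.ext (show f i - 1 = g i by omega)
      rw [he]
      exact h
    · have hfi := hfval2 i hi
      have hiv := i.isLt
      rw [if_neg (show ¬(f i = 0) by omega), if_neg (show ¬(f i ≤ k - p - 1) by omega)]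
  have hnv' : ∀ i : Fin m, nMap k m v' i = k - m + (i : ℕ) - f i :=
    nMap_enum hv' hfmono hfmem
  have hnv : ∀ i : Fin m, nMap k m v i = k - m + (i : ℕ) - g i :=
    nMap_enum hv hg.1 hg.2.1
  intro i
  rw [hnv' i, hnv i]
  by_cases hi : (i : ℕ) < m - p
  · rw [hfval1 i hi]; omega
  · rw [hfval2 i hi]
    have hpge : 1 ≤ p := by have := i.isLt; omega
    have h0 : m - p - 0 < m := by omega
    have hbase := claim7 0 hmk hp hg hg' hsh (fun i hi => absurd hi (by omega)) h0
    have hgap : g ⟨m - p - 0, h0⟩ + ((i : ℕ) - (m - p - 0)) ≤ g i :=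
      enum_gap hg.1 ⟨m - p - 0, h0⟩ i (show m - p - 0 ≤ (i : ℕ) by omega)
    have hle : g i ≤ k - m + (i : ℕ) := enum_le hg (le_of_lt hmk) i
    have hiv := i.isLt
    omega

/-- Forward direction, `σ = false`. -/
lemma forward_false (hm : 0 < m) (hmk : m < k) (hp : p ≤ m)
    (hv : (Finset.univ.filter (fun j : Fin k => v j = false)).card = m)
    (hv' : (Finset.univ.filter (fun j : Fin k => v' j = false)).card = m)
    (hsh : shiftRel k v false v' p) :
    (∀ hm1 : m - 1 < m, nMap k m v ⟨m - 1, hm1⟩ = 0) ∧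
    (∀ i : Fin m, ∀ hi : (i : ℕ) - 1 < m,
      nMap k m v' i = if (i : ℕ) = 0 then k - m else nMap k m v ⟨(i : ℕ) - 1, hi⟩) := by
  set g : Fin m → ℕ := fun i =>
    ((Finset.univ.filter (fun j : Fin k => v j = false)).orderEmbOfFin hv i : ℕ) with hgdef
  set g' : Fin m → ℕ := fun i =>
    ((Finset.univ.filter (fun j : Fin k => v' j = false)).orderEmbOfFin hv' i : ℕ) with hg'def
  have hg : IsEnum k m v g := isEnum_canonical hv
  have hg' : IsEnum k m v' g' := isEnum_canonical hv'
  have hzero : ∀ i : Fin m, (i : ℕ) < 1 → g' i = 0 :=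
    zero_of_sigma_false (by omega) hm hg' hsh
  have hpos : ∀ i : Fin m, 1 ≤ (i : ℕ) → (i : ℕ) < m - p → 1 ≤ g' i := by
    intro i h1 _
    have h2 := hg'.1 (show (⟨0, hm⟩ : Fin m) < i from by rw [Fin.lt_def]; show 0 < (i : ℕ); omega)
    have h3 := hzero ⟨0, hm⟩ (by simp)
    omega
  have hpm : p < m := by
    by_contra hc
    push_neg at hc
    have hjm : m - 1 - (p - 1) < m := by omega
    have h1 := claim_top hmk hp hg' hsh (p - 1) (by omega) hjm
    have h2 := hzero ⟨m - 1 - (p - 1), hjm⟩ (show m - 1 - (p - 1) < 1 by omega)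
    omega
  have hcut : ∀ l : Fin m, (l : ℕ) + 1 < m - p → g l ≤ k - p - 2 :=
    claim5 1 hmk hp hg hg' hsh hpos
  have h0 : m - p - 1 < m := by omega
  have hbase := claim7 1 hmk hp hg hg' hsh hzero h0
  have hglast : ∀ hm1 : m - 1 < m, g ⟨m - 1, hm1⟩ = k - 1 := by
    intro hm1
    have hgap : g ⟨m - p - 1, h0⟩ + ((m - 1) - (m - p - 1)) ≤ g ⟨m - 1, hm1⟩ :=
      enum_gap hg.1 ⟨m - p - 1, h0⟩ ⟨m - 1, hm1⟩ (show m - p - 1 ≤ m - 1 by omega)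
    have hlt : g ⟨m - 1, hm1⟩ < k := enum_lt hg _
    omega
  have hnv : ∀ i : Fin m, nMap k m v i = k - m + (i : ℕ) - g i :=
    nMap_enum hv hg.1 hg.2.1
  constructor
  · intro hm1
    rw [hnv ⟨m - 1, hm1⟩, hglast hm1]
    show k - m + (m - 1) - (k - 1) = 0
    omega
  set f : Fin m → ℕ := fun i =>
    if (i : ℕ) = 0 then 0
    else if (i : ℕ) < m - p then
      g ⟨(i : ℕ) - 1, lt_of_le_of_lt (Nat.sub_le _ _) i.isLt⟩ + 1
    else k - m + (i : ℕ) with hfdef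
  have hfval0 : ∀ i : Fin m, (i : ℕ) = 0 → f i = 0 := by
    intro i hi; simp only [hfdef]; rw [if_pos hi]
  have hfval1 : ∀ i : Fin m, ¬((i : ℕ) = 0) → (i : ℕ) < m - p →
      f i = g ⟨(i : ℕ) - 1, lt_of_le_of_lt (Nat.sub_le _ _) i.isLt⟩ + 1 := by
    intro i hi0 him; simp only [hfdef]; rw [if_neg hi0, if_pos him]
  have hfval2 : ∀ i : Fin m, ¬((i : ℕ) = 0) → ¬((i : ℕ) < m - p) →
      f i = k - m + (i : ℕ) := by
    intro i hi0 him; simp only [hfdef]; rw [if_neg hi0, if_neg him]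
  have hgprev_cut : ∀ i : Fin m, ¬((i : ℕ) = 0) → (i : ℕ) < m - p →
      g ⟨(i : ℕ) - 1, lt_of_le_of_lt (Nat.sub_le _ _) i.isLt⟩ ≤ k - p - 2 := by
    intro i hi0 him
    exact hcut ⟨(i : ℕ) - 1, lt_of_le_of_lt (Nat.sub_le _ _) i.isLt⟩
      (show (i : ℕ) - 1 + 1 < m - p by omega)
  have hflt : ∀ i : Fin m, f i < k := by
    intro i
    by_cases hi0 : (i : ℕ) = 0
    · rw [hfval0 i hi0]; omega
    · by_cases him : (i : ℕ) < m - p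
      · have := hgprev_cut i hi0 him; rw [hfval1 i hi0 him]; omega
      · have := i.isLt; rw [hfval2 i hi0 him]; omega
  have hfmono : StrictMono f := by
    intro a b hab
    have habv : (a : ℕ) < (b : ℕ) := hab
    have hbv := b.isLt
    have hb0 : ¬((b : ℕ) = 0) := by omega
    by_cases ha0 : (a : ℕ) = 0
    · rw [hfval0 a ha0]
      by_cases hbm : (b : ℕ) < m - p
      · rw [hfval1 b hb0 hbm]; omega
      · rw [hfval2 b hb0 hbm]; omega
    · by_cases ham : (a : ℕ) < m - p
      · rw [hfval1 a ha0 ham]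
        by_cases hbm : (b : ℕ) < m - p
        · rw [hfval1 b hb0 hbm]
          have := hg.1 (show (⟨(a : ℕ) - 1, lt_of_le_of_lt (Nat.sub_le _ _) a.isLt⟩ : Fin m)
              < ⟨(b : ℕ) - 1, lt_of_le_of_lt (Nat.sub_le _ _) b.isLt⟩
            from by rw [Fin.lt_def]; show (a : ℕ) - 1 < (b : ℕ) - 1; omega)
          omega
        · rw [hfval2 b hb0 hbm]
          have := hgprev_cut a ha0 ham
          omega
      · have hbm : ¬((b : ℕ) < m - p) := by omega
        rw [hfval2 a ha0 ham, hfval2 b hb0 hbm]; omega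
  have hfmem : ∀ i : Fin m, ∃ h : f i < k, v' ⟨f i, h⟩ = false := by
    intro i
    refine ⟨hflt i, ?_⟩
    rw [hsh ⟨f i, hflt i⟩]
    by_cases hi0 : (i : ℕ) = 0
    · rw [if_pos (show f i = 0 from hfval0 i hi0)]
    · by_cases him : (i : ℕ) < m - p
      · have hfi := hfval1 i hi0 him
        have hc := hgprev_cut i hi0 him
        rw [if_neg (show ¬(f i = 0) by omega), if_pos (show f i ≤ k - p - 1 by omega)]
        have h := (hg.2.1 ⟨(i : ℕ) - 1, lt_of_le_of_lt (Nat.sub_le _ _) i.isLt⟩).2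
        have he : (⟨f i - 1, by have := hflt i; omega⟩ : Fin k)
            = ⟨g ⟨(i : ℕ) - 1, lt_of_le_of_lt (Nat.sub_le _ _) i.isLt⟩,
              (hg.2.1 ⟨(i : ℕ) - 1, lt_of_le_of_lt (Nat.sub_le _ _) i.isLt⟩).1⟩ :=
          Fin.ext (show f i - 1
            = g ⟨(i : ℕ) - 1, lt_of_le_of_lt (Nat.sub_le _ _) i.isLt⟩ by omega)
        rw [he]
        exact h
      · have hfi := hfval2 i hi0 him
        have hiv := i.isLt
        rw [if_neg (show ¬(f i = 0) by omega), if_neg (show ¬(f i ≤ k - p - 1) by omega)]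
  have hnv' : ∀ i : Fin m, nMap k m v' i = k - m + (i : ℕ) - f i :=
    nMap_enum hv' hfmono hfmem
  intro i hi
  rw [hnv' i]
  by_cases hi0 : (i : ℕ) = 0
  · rw [if_pos hi0, hfval0 i hi0]; omega
  · have hnvi : nMap k m v ⟨(i : ℕ) - 1, hi⟩ = k - m + ((i : ℕ) - 1) - g ⟨(i : ℕ) - 1, hi⟩ :=
      hnv _
    rw [if_neg hi0, hnvi]
    have hle : g ⟨(i : ℕ) - 1, hi⟩ ≤ k - m + ((i : ℕ) - 1) :=
      enum_le hg (le_of_lt hmk) ⟨(i : ℕ) - 1, hi⟩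
    have heq : g ⟨(i : ℕ) - 1, lt_of_le_of_lt (Nat.sub_le _ _) i.isLt⟩
        = g ⟨(i : ℕ) - 1, hi⟩ := rfl
    by_cases him : (i : ℕ) < m - p
    · rw [hfval1 i hi0 him, heq]
      omega
    · rw [hfval2 i hi0 him]
      have hgap : g ⟨m - p - 1, h0⟩ + (((i : ℕ) - 1) - (m - p - 1)) ≤ g ⟨(i : ℕ) - 1, hi⟩ :=
        enum_gap hg.1 ⟨m - p - 1, h0⟩ ⟨(i : ℕ) - 1, hi⟩ (show m - p - 1 ≤ (i : ℕ) - 1 by omega)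
      have hiv := i.isLt
      omega

end AutIso

namespace AutIso

variable {k m : ℕ} {v v' : Fin k → Bool}

/-- Backward direction, `σ = true`. -/
lemma backward_true (hm : 0 < m) (hmk : m < k)
    (hv : (Finset.univ.filter (fun j : Fin k => v j = false)).card = m)
    (hv' : (Finset.univ.filter (fun j : Fin k => v' j = false)).card = m)
    (hstep : ∀ i : Fin m, nMap k m v' i = nMap k m v i - 1) :
    ∃ p ≤ m, shiftRel k v true v' p := by
  classical
  set g : Fin m → ℕ := fun i =>
    ((Finset.univ.filter (fun j : Fin k => v j = false)).orderEmbOfFin hv i : ℕ) with hgdef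
  set g' : Fin m → ℕ := fun i =>
    ((Finset.univ.filter (fun j : Fin k => v' j = false)).orderEmbOfFin hv' i : ℕ) with hg'def
  have hg : IsEnum k m v g := isEnum_canonical hv
  have hg' : IsEnum k m v' g' := isEnum_canonical hv'
  have hnv : ∀ i : Fin m, nMap k m v i = k - m + (i : ℕ) - g i :=
    nMap_enum hv hg.1 hg.2.1
  have hnv' : ∀ i : Fin m, nMap k m v' i = k - m + (i : ℕ) - g' i :=
    nMap_enum hv' hg'.1 hg'.2.1
  have hgle : ∀ i : Fin m, g i ≤ k - m + (i : ℕ) := enum_le hg (le_of_lt hmk)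
  have hg'le : ∀ i : Fin m, g' i ≤ k - m + (i : ℕ) := enum_le hg' (le_of_lt hmk)
  have hex : ∃ n, ∀ j : Fin m, n ≤ (j : ℕ) → g j = k - m + (j : ℕ) :=
    ⟨m, fun j hj => absurd j.isLt (by omega)⟩
  set t := Nat.find hex with htdef
  have ht : ∀ j : Fin m, t ≤ (j : ℕ) → g j = k - m + (j : ℕ) := Nat.find_spec hex
  have htm : t ≤ m := Nat.find_le (fun j hj => absurd j.isLt (by omega))
  have hlow : ∀ i : Fin m, (i : ℕ) < t → g i < k - m + (i : ℕ) := by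
    intro i hit
    have hne := Nat.find_min hex (show t - 1 < t by omega)
    push_neg at hne
    obtain ⟨j, hj1, hj2⟩ := hne
    have hgap : g i + ((j : ℕ) - (i : ℕ)) ≤ g j := enum_gap hg.1 i j (by omega)
    have h1 := hgle j
    have h2 := hgle i
    omega
  refine ⟨m - t, by omega, ?_⟩
  have hg'val : ∀ i : Fin m, g' i = if (i : ℕ) < t then g i + 1 else k - m + (i : ℕ) := by
    intro i
    have h1 := hstep i
    rw [hnv i, hnv' i] at h1
    have h2 := hg'le i
    by_cases hit : (i : ℕ) < t
    · rw [if_pos hit]; have := hlow i hit; have := hgle i; omega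
    · rw [if_neg hit]; have := ht i (by omega); omega
  intro j
  by_cases hj0 : (j : ℕ) = 0
  · rw [if_pos hj0]
    cases hvj : v' j with
    | true => rfl
    | false =>
      exfalso
      obtain ⟨i, hi⟩ := hg'.2.2 j hvj
      rw [hg'val i] at hi
      by_cases hit : (i : ℕ) < t
      · rw [if_pos hit] at hi; omega
      · rw [if_neg hit] at hi; omega
  · rw [if_neg hj0]
    by_cases hjle : (j : ℕ) ≤ k - (m - t) - 1
    · rw [if_pos hjle]
      by_cases hvp : v ⟨(j : ℕ) - 1, lt_of_le_of_lt (Nat.sub_le _ _) j.isLt⟩ = false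
      · rw [hvp]
        obtain ⟨l, hl⟩ := hg.2.2 _ hvp
        have hlval : g l = (j : ℕ) - 1 := hl
        have hjk := j.isLt
        have hlt : (l : ℕ) < t := by
          by_contra hc
          push_neg at hc
          have h3 := ht l hc
          have h4 := l.isLt
          omega
        apply (enum_char hg' j).2
        exact ⟨l, by rw [hg'val l, if_pos hlt]; omega⟩
      · have hvp' : v ⟨(j : ℕ) - 1, lt_of_le_of_lt (Nat.sub_le _ _) j.isLt⟩ = true := by
          simpa using hvp
        rw [hvp']
        cases hvj : v' j with
        | true => rfl
        | false =>
          exfalso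
          obtain ⟨i, hi⟩ := hg'.2.2 j hvj
          rw [hg'val i] at hi
          by_cases hit : (i : ℕ) < t
          · rw [if_pos hit] at hi
            apply hvp
            apply (enum_char hg ⟨(j : ℕ) - 1, lt_of_le_of_lt (Nat.sub_le _ _) j.isLt⟩).2
            exact ⟨i, show g i = (j : ℕ) - 1 by omega⟩
          · rw [if_neg hit] at hi
            have h4 := i.isLt
            omega
    · rw [if_neg hjle]
      have hjk := j.isLt
      have hidx : m - (k - (j : ℕ)) < m := by omega
      apply (enum_char hg' j).2
      refine ⟨⟨m - (k - (j : ℕ)), hidx⟩, ?_⟩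
      rw [hg'val ⟨m - (k - (j : ℕ)), hidx⟩,
        if_neg (show ¬(m - (k - (j : ℕ)) < t) by omega)]
      show k - m + (m - (k - (j : ℕ))) = (j : ℕ)
      omega

/-- Backward direction, `σ = false`. -/
lemma backward_false (hm : 0 < m) (hmk : m < k)
    (hv : (Finset.univ.filter (fun j : Fin k => v j = false)).card = m)
    (hv' : (Finset.univ.filter (fun j : Fin k => v' j = false)).card = m)
    (hz : ∀ hm1 : m - 1 < m, nMap k m v ⟨m - 1, hm1⟩ = 0)
    (hstep : ∀ i : Fin m, ∀ hi : (i : ℕ) - 1 < m, nMap k m v' i =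
      if (i : ℕ) = 0 then k - m else nMap k m v ⟨(i : ℕ) - 1, hi⟩) :
    ∃ p ≤ m, shiftRel k v false v' p := by
  classical
  set g : Fin m → ℕ := fun i =>
    ((Finset.univ.filter (fun j : Fin k => v j = false)).orderEmbOfFin hv i : ℕ) with hgdef
  set g' : Fin m → ℕ := fun i =>
    ((Finset.univ.filter (fun j : Fin k => v' j = false)).orderEmbOfFin hv' i : ℕ) with hg'def
  have hg : IsEnum k m v g := isEnum_canonical hv
  have hg' : IsEnum k m v' g' := isEnum_canonical hv'
  have hnv : ∀ i : Fin m, nMap k m v i = k - m + (i : ℕ) - g i :=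
    nMap_enum hv hg.1 hg.2.1
  have hnv' : ∀ i : Fin m, nMap k m v' i = k - m + (i : ℕ) - g' i :=
    nMap_enum hv' hg'.1 hg'.2.1
  have hgle : ∀ i : Fin m, g i ≤ k - m + (i : ℕ) := enum_le hg (le_of_lt hmk)
  have hg'le : ∀ i : Fin m, g' i ≤ k - m + (i : ℕ) := enum_le hg' (le_of_lt hmk)
  have hex : ∃ n, ∀ j : Fin m, n ≤ (j : ℕ) → g j = k - m + (j : ℕ) :=
    ⟨m, fun j hj => absurd j.isLt (by omega)⟩
  set t := Nat.find hex with htdef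
  have ht : ∀ j : Fin m, t ≤ (j : ℕ) → g j = k - m + (j : ℕ) := Nat.find_spec hex
  have hlow : ∀ i : Fin m, (i : ℕ) < t → g i < k - m + (i : ℕ) := by
    intro i hit
    have hne := Nat.find_min hex (show t - 1 < t by omega)
    push_neg at hne
    obtain ⟨j, hj1, hj2⟩ := hne
    have hgap : g i + ((j : ℕ) - (i : ℕ)) ≤ g j := enum_gap hg.1 i j (by omega)
    have h1 := hgle j
    have h2 := hgle i
    omega
  have hm1 : m - 1 < m := by omega
  have hgm1 : g ⟨m - 1, hm1⟩ = k - 1 := by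
    have h1 : nMap k m v ⟨m - 1, hm1⟩ = k - m + (m - 1) - g ⟨m - 1, hm1⟩ := hnv _
    have h2 : g ⟨m - 1, hm1⟩ ≤ k - m + (m - 1) := hgle _
    have h3 := hz hm1
    omega
  have htm : t ≤ m - 1 := Nat.find_le (fun j hj => by
    have hje : j = ⟨m - 1, hm1⟩ := Fin.ext (show (j : ℕ) = m - 1 by have := j.isLt; omega)
    rw [hje, hgm1]
    show k - 1 = k - m + (m - 1)
    omega)
  have hg'val0 : ∀ i : Fin m, (i : ℕ) = 0 → g' i = 0 := by
    intro i hi0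
    have h1 := hstep i (lt_of_le_of_lt (Nat.sub_le _ _) i.isLt)
    rw [hnv' i, if_pos hi0] at h1
    have h2 := hg'le i
    omega
  have hg'val1 : ∀ i : Fin m, ∀ hi1 : (i : ℕ) - 1 < m, ¬((i : ℕ) = 0) → (i : ℕ) < t + 1 →
      g' i = g ⟨(i : ℕ) - 1, hi1⟩ + 1 := by
    intro i hi1 hi0 hit
    have h1 := hstep i hi1
    rw [hnv' i, if_neg hi0] at h1
    have hnvi : nMap k m v ⟨(i : ℕ) - 1, hi1⟩ = k - m + ((i : ℕ) - 1) - g ⟨(i : ℕ) - 1, hi1⟩ :=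
      hnv _
    rw [hnvi] at h1
    have h3 : g ⟨(i : ℕ) - 1, hi1⟩ ≤ k - m + ((i : ℕ) - 1) := hgle _
    have h4 : g ⟨(i : ℕ) - 1, hi1⟩ < k - m + ((i : ℕ) - 1) :=
      hlow _ (show (i : ℕ) - 1 < t by omega)
    have h2 := hg'le i
    omega
  have hg'val2 : ∀ i : Fin m, ¬((i : ℕ) = 0) → ¬((i : ℕ) < t + 1) →
      g' i = k - m + (i : ℕ) := by
    intro i hi0 hit
    have hi1 : (i : ℕ) - 1 < m := lt_of_le_of_lt (Nat.sub_le _ _) i.isLt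
    have h1 := hstep i hi1
    rw [hnv' i, if_neg hi0] at h1
    have hnvi : nMap k m v ⟨(i : ℕ) - 1, hi1⟩ = k - m + ((i : ℕ) - 1) - g ⟨(i : ℕ) - 1, hi1⟩ :=
      hnv _
    rw [hnvi] at h1
    have h4 : g ⟨(i : ℕ) - 1, hi1⟩ = k - m + ((i : ℕ) - 1) :=
      ht _ (show t ≤ (i : ℕ) - 1 by omega)
    have h2 := hg'le i
    omega
  refine ⟨m - t - 1, by omega, ?_⟩
  have hkp : k - (m - t - 1) - 1 = k - m + t := by omega
  intro j
  by_cases hj0 : (j : ℕ) = 0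
  · rw [if_pos hj0]
    apply (enum_char hg' j).2
    refine ⟨⟨0, hm⟩, ?_⟩
    rw [hg'val0 ⟨0, hm⟩ rfl]
    omega
  · rw [if_neg hj0]
    by_cases hjle : (j : ℕ) ≤ k - (m - t - 1) - 1
    · rw [if_pos hjle]
      rw [hkp] at hjle
      by_cases hvp : v ⟨(j : ℕ) - 1, lt_of_le_of_lt (Nat.sub_le _ _) j.isLt⟩ = false
      · rw [hvp]
        obtain ⟨l, hl⟩ := hg.2.2 _ hvp
        have hlval : g l = (j : ℕ) - 1 := hl
        have hjk := j.isLt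
        have hlt : (l : ℕ) < t := by
          by_contra hc
          push_neg at hc
          have h3 := ht l hc
          have h4 := l.isLt
          omega
        apply (enum_char hg' j).2
        have hli : (l : ℕ) + 1 < m := by omega
        refine ⟨⟨(l : ℕ) + 1, hli⟩, ?_⟩
        have hi1 : ((⟨(l : ℕ) + 1, hli⟩ : Fin m) : ℕ) - 1 < m := by
          show (l : ℕ) + 1 - 1 < m; omega
        rw [hg'val1 ⟨(l : ℕ) + 1, hli⟩ hi1 (show ¬((l : ℕ) + 1 = 0) by omega)
          (show (l : ℕ) + 1 < t + 1 by omega)]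
        have hee : (⟨((⟨(l : ℕ) + 1, hli⟩ : Fin m) : ℕ) - 1, hi1⟩ : Fin m) = l :=
          Fin.ext (show (l : ℕ) + 1 - 1 = (l : ℕ) by omega)
        rw [hee]
        omega
      · have hvp' : v ⟨(j : ℕ) - 1, lt_of_le_of_lt (Nat.sub_le _ _) j.isLt⟩ = true := by
          simpa using hvp
        rw [hvp']
        cases hvj : v' j with
        | true => rfl
        | false =>
          exfalso
          obtain ⟨i, hi⟩ := hg'.2.2 j hvj
          by_cases hi0 : (i : ℕ) = 0
          · rw [hg'val0 i hi0] at hi; omega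
          · by_cases hit : (i : ℕ) < t + 1
            · have hi1 : (i : ℕ) - 1 < m := lt_of_le_of_lt (Nat.sub_le _ _) i.isLt
              rw [hg'val1 i hi1 hi0 hit] at hi
              apply hvp
              apply (enum_char hg ⟨(j : ℕ) - 1, lt_of_le_of_lt (Nat.sub_le _ _) j.isLt⟩).2
              exact ⟨⟨(i : ℕ) - 1, hi1⟩, show g ⟨(i : ℕ) - 1, hi1⟩ = (j : ℕ) - 1 by omega⟩
            · rw [hg'val2 i hi0 hit] at hi
              have h4 := i.isLt
              omega
    · rw [if_neg hjle]
      rw [hkp] at hjle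
      have hjk := j.isLt
      have hidx : m - (k - (j : ℕ)) < m := by omega
      apply (enum_char hg' j).2
      refine ⟨⟨m - (k - (j : ℕ)), hidx⟩, ?_⟩
      rw [hg'val2 ⟨m - (k - (j : ℕ)), hidx⟩
        (show ¬(m - (k - (j : ℕ)) = 0) by omega)
        (show ¬(m - (k - (j : ℕ)) < t + 1) by omega)]
      show k - m + (m - (k - (j : ℕ))) = (j : ℕ)
      omega

end AutIso

namespace AutIso

lemma nMap_Uset {k m : ℕ} {v : Fin k → Bool} (hmk : m < k)
    (hv : (Finset.univ.filter (fun j : Fin k => v j = false)).card = m) :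
    nMap k m v ∈ Uset k m := by
  set g : Fin m → ℕ := fun i =>
    ((Finset.univ.filter (fun j : Fin k => v j = false)).orderEmbOfFin hv i : ℕ) with hgdef
  have hg : IsEnum k m v g := isEnum_canonical hv
  have hnv : ∀ i : Fin m, nMap k m v i = k - m + (i : ℕ) - g i :=
    nMap_enum hv hg.1 hg.2.1
  refine ⟨?_, ?_⟩
  · intro i
    rw [hnv i]
    have := enum_ge hg i
    omega
  · intro i j hij
    rw [hnv i, hnv j]
    have hij' : (i : ℕ) ≤ (j : ℕ) := hij
    have hgap := enum_gap hg.1 i j hij'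
    have h1 := enum_le hg (le_of_lt hmk) i
    have h2 := enum_le hg (le_of_lt hmk) j
    omega

end AutIso

/-- The automata `(V, E)` and `(U, F)` are isomorphic via the bijection `n`:
(i) `n(v_init) = ⟨0, …, 0⟩` where `v_init = 0^m 1^(k-m)`, and
(ii) for all `v, v' ∈ V` and `σ ∈ {0,1}`, `(v, σ, v') ∈ E ↔ (n v, σ, n v') ∈ F`. -/
theorem automata_isomorphic (k m : ℕ) (hm : 0 < m) (hmk : m < k) :
    (nMap k m (fun i => decide ((i : ℕ) < k - m)) = fun _ => 0) ∧
    (∀ v ∈ Vset k m, ∀ v' ∈ Vset k m, ∀ σ : Bool,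
      Erel k m v σ v' ↔ Frel k m hm (nMap k m v) σ (nMap k m v')) := by
  constructor
  · -- part (i)
    have hcard : (Finset.univ.filter
        (fun j : Fin k => (fun i : Fin k => decide ((i : ℕ) < k - m)) j = false)).card = m := by
      have hcc : (Finset.univ.filter
          (fun j : Fin k => (fun i : Fin k => decide ((i : ℕ) < k - m)) j = false)).card
          = (Finset.univ : Finset (Fin m)).card := by
        refine Finset.card_bij' (i := fun (a : Fin k) (_ : a ∈ _) =>
            (⟨(a : ℕ) - (k - m), by have := a.isLt; omega⟩ : Fin m))
          (j := fun (b : Fin m) (_ : b ∈ _) =>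
            (⟨k - m + (b : ℕ), by have := b.isLt; omega⟩ : Fin k)) ?_ ?_ ?_ ?_
        · intro a ha
          exact Finset.mem_univ _
        · intro b hb
          simp only [Finset.mem_filter, Finset.mem_univ, true_and]
          show decide (k - m + (b : ℕ) < k - m) = false
          rw [decide_eq_false_iff_not]
          omega
        · intro a ha
          simp only [Finset.mem_filter, Finset.mem_univ, true_and] at ha
          rw [decide_eq_false_iff_not, not_lt] at ha
          apply Fin.ext
          show k - m + ((a : ℕ) - (k - m)) = (a : ℕ)
          omega
        · intro b hb
          apply Fin.ext
          show k - m + (b : ℕ) - (k - m) = (b : ℕ)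
          omega
      rw [hcc, Finset.card_univ, Fintype.card_fin]
    funext i
    have hmono : StrictMono (fun i : Fin m => k - m + (i : ℕ)) := by
      intro a b hab
      have : (a : ℕ) < (b : ℕ) := hab
      show k - m + (a : ℕ) < k - m + (b : ℕ)
      omega
    have hmem : ∀ i : Fin m, ∃ h : (fun i : Fin m => k - m + (i : ℕ)) i < k,
        (fun i : Fin k => decide ((i : ℕ) < k - m)) ⟨(fun i : Fin m => k - m + (i : ℕ)) i, h⟩
          = false := by
      intro i
      refine ⟨show k - m + (i : ℕ) < k by have := i.isLt; omega, ?_⟩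
      show decide (k - m + (i : ℕ) < k - m) = false
      rw [decide_eq_false_iff_not]
      omega
    have := AutIso.nMap_enum hcard hmono hmem i
    rw [this]
    show k - m + (i : ℕ) - (k - m + (i : ℕ)) = 0
    omega
  · intro v hv v' hv' σ
    have hvc : (Finset.univ.filter (fun j : Fin k => v j = false)).card = m := hv
    have hv'c : (Finset.univ.filter (fun j : Fin k => v' j = false)).card = m := hv'
    constructor
    · rintro ⟨p, hp, hsh⟩
      refine ⟨AutIso.nMap_Uset hmk hvc, ?_⟩
      cases σ with
      | true =>
        left
        refine ⟨rfl, ?_⟩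
        funext i
        exact AutIso.forward_true hm hmk hp hvc hv'c hsh i
      | false =>
        right
        refine ⟨rfl, ?_, ?_⟩
        · exact (AutIso.forward_false hm hmk hp hvc hv'c hsh).1 _
        · funext i
          exact (AutIso.forward_false hm hmk hp hvc hv'c hsh).2 i
            (lt_of_le_of_lt (Nat.sub_le _ _) i.isLt)
    · rintro ⟨hU, hcase⟩
      rcases hcase with ⟨hσ, hone⟩ | ⟨hσ, hz, hzs⟩
      · subst hσ
        exact AutIso.backward_true hm hmk hvc hv'c (fun i => congrFun hone i)
      · subst hσ
        apply AutIso.backward_false hm hmk hvc hv'c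
        · intro hm1
          exact hz
        · intro i hi
          exact congrFun hzs i
end

section
/- For m > 2, the cardinality of the compressed state set U_c equals C(k−1, m−1) + Σ_{i=0}^{k−m−1} C(m−3+i, i) · Σ_{j=1}^{k−m−i} ⌈j/c⌉. -/
open Finset

lemma hockey (r : ℕ) : ∀ s : ℕ, ∑ i ∈ range s, (i + r).choose r = (s + r).choose (r + 1)
  | 0 => by simp [Nat.choose_eq_zero_of_lt]
  | (s+1) => by
      rw [Finset.sum_range_succ, hockey r s]
      have h : s + 1 + r = (s + r) + 1 := by omega
      rw [h]
      have h2 := Nat.choose_succ_succ (s+r) r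
      simp only [Nat.succ_eq_add_one] at h2
      omega

lemma tri_swap (f g : ℕ → ℕ) : ∀ n : ℕ,
    ∑ i ∈ range n, ∑ j ∈ range (n - i), f i * g j
      = ∑ j ∈ range n, ∑ i ∈ range (n - j), f i * g j
  | 0 => by simp
  | (n+1) => by
      have h1 : ∀ i ∈ range (n+1), ∑ j ∈ range (n+1-i), f i * g j
          = (∑ j ∈ range (n-i), f i * g j) + f i * g (n - i) := by
        intro i hi
        rw [mem_range] at hi
        have h : n + 1 - i = (n - i) + 1 := by omega
        rw [h, Finset.sum_range_succ]
      have h2 : ∀ j ∈ range (n+1), ∑ i ∈ range (n+1-j), f i * g j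
          = (∑ i ∈ range (n-j), f i * g j) + f (n - j) * g j := by
        intro j hj
        rw [mem_range] at hj
        have h : n + 1 - j = (n - j) + 1 := by omega
        rw [h, Finset.sum_range_succ]
      rw [Finset.sum_congr rfl h1, Finset.sum_congr rfl h2,
        Finset.sum_add_distrib, Finset.sum_add_distrib]
      congr 1
      · rw [Finset.sum_range_succ, Finset.sum_range_succ]
        simp only [Nat.sub_self, range_zero, sum_empty, add_zero]
        exact tri_swap f g n
      · have h := Finset.sum_range_reflect (fun j => f (n - j) * g j) (n+1)
        rw [← h]
        apply Finset.sum_congr rfl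
        intro i hi
        rw [mem_range] at hi
        have e1 : n + 1 - 1 - i = n - i := by omega
        have e2 : n - (n - i) = i := by omega
        rw [e1, e2]

lemma ceil_div_eq (c j : ℕ) (hc : 1 ≤ c) :
    ⌈((1 + j : ℕ) : ℚ) / (c : ℚ)⌉₊ = j / c + 1 := by
  have hc' : (0:ℚ) < (c:ℚ) := by exact_mod_cast hc
  have h1 : (j / c) * c ≤ j := Nat.div_mul_le_self j c
  have h2 : j < (j / c + 1) * c := (Nat.div_lt_iff_lt_mul (by omega)).mp (Nat.lt_succ_self _)
  have h3 : (j / c) * c < 1 + j := by rw [add_comm]; exact Nat.lt_succ_of_le h1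
  have h4 : 1 + j ≤ (j / c + 1) * c := by rw [add_comm]; exact h2
  rw [Nat.ceil_eq_iff (Nat.succ_ne_zero _)]
  constructor
  · have he : ((j / c + 1 - 1 : ℕ) : ℚ) = ((j/c : ℕ) : ℚ) := by norm_num
    rw [he, lt_div_iff₀ hc']
    exact_mod_cast h3
  · rw [div_le_iff₀ hc']
    exact_mod_cast h4

def antiFinset (r b : ℕ) : Finset (Fin r → ℕ) :=
  (Fintype.piFinset fun _ => Finset.range (b+1)).filter
    fun u => ∀ i j : Fin r, i ≤ j → u j ≤ u i

lemma mem_antiFinset {r b : ℕ} {u : Fin r → ℕ} :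
    u ∈ antiFinset r b ↔ (∀ i, u i ≤ b) ∧ ∀ i j : Fin r, i ≤ j → u j ≤ u i := by
  simp [antiFinset, Fintype.mem_piFinset, Nat.lt_succ_iff]

lemma card_antiFinset : ∀ r b : ℕ, (antiFinset r b).card = (b + r).choose r
  | 0, b => by
      rw [Nat.choose_zero_right, Finset.card_eq_one]
      refine ⟨fun i => 0, ?_⟩
      ext u
      simp only [mem_antiFinset, Finset.mem_singleton]
      constructor
      · intro _; funext i; exact i.elim0
      · intro h; subst h; exact ⟨fun i => i.elim0, fun i => i.elim0⟩
  | (r+1), b => by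
      have key : (antiFinset (r+1) b).card
          = ((range (b+1)).sigma fun t => antiFinset r t).card := by
        refine Finset.card_bij'
          (fun u _ => (⟨u 0, fun i => u i.succ⟩ : Σ _ : ℕ, Fin r → ℕ))
          (fun p _ => Fin.cases p.1 p.2) ?hi ?hj ?li ?ri
        case hi =>
          intro u hu
          rw [mem_antiFinset] at hu
          obtain ⟨hb, ha⟩ := hu
          rw [Finset.mem_sigma, mem_range, Nat.lt_succ_iff]
          refine ⟨hb 0, ?_⟩
          rw [mem_antiFinset]
          exact ⟨fun i => ha 0 i.succ (Fin.zero_le _),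
            fun i j hij => ha i.succ j.succ (Fin.succ_le_succ_iff.mpr hij)⟩
        case hj =>
          rintro ⟨t, v⟩ hp
          rw [Finset.mem_sigma, mem_range, Nat.lt_succ_iff, mem_antiFinset] at hp
          obtain ⟨ht, hvb, hva⟩ := hp
          rw [mem_antiFinset]
          constructor
          · intro i
            induction i using Fin.cases with
            | zero => simpa using ht
            | succ i => simpa using le_trans (hvb i) ht
          · intro i j hij
            induction i using Fin.cases with
            | zero =>
              induction j using Fin.cases with
              | zero => simp
              | succ j => simpa using hvb j
            | succ i =>
              induction j using Fin.cases with
              | zero =>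
                exfalso
                rw [Fin.le_def] at hij
                simp at hij
              | succ j =>
                simp only [Fin.cases_succ]
                exact hva i j (by rwa [Fin.succ_le_succ_iff] at hij)
        case li =>
          intro u _
          funext x
          induction x using Fin.cases <;> simp
        case ri =>
          rintro ⟨t, v⟩ _
          simp
      rw [key, Finset.card_sigma]
      have h : ∀ t ∈ range (b+1), (antiFinset r t).card = (t + r).choose r :=
        fun t _ => card_antiFinset r t
      rw [Finset.sum_congr rfl h, hockey]
      congr 1
      omega

lemma main_id (c : ℕ) (hc : 1 ≤ c) (m n : ℕ) (hm : 3 ≤ m) :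
    ∑ t ∈ range n, ((n - 1 - t)/c + 1) * ((t + (m-2)).choose (m-2))
      = ∑ i ∈ range n, (m-3+i).choose i * ∑ j ∈ Icc 1 (n-i), ⌈(j : ℚ) / (c : ℚ)⌉₊ := by
  have inner : ∀ s : ℕ, ∑ j ∈ Icc 1 s, ⌈(j : ℚ) / (c : ℚ)⌉₊ = ∑ j ∈ range s, (j/c + 1) := by
    intro s
    rw [← Finset.Ico_add_one_right_eq_Icc, Finset.sum_Ico_eq_sum_range]
    have hs : s + 1 - 1 = s := rfl
    rw [hs]
    exact Finset.sum_congr rfl fun j _ => ceil_div_eq c j hc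
  have csym : ∀ i : ℕ, (m-3+i).choose i = (i + (m-3)).choose (m-3) := by
    intro i
    have h1 : (i + (m-3)) - i = m - 3 := by omega
    have h2 := Nat.choose_symm (Nat.le_add_right i (m-3))
    rw [h1] at h2
    rw [add_comm (m-3) i]
    exact h2.symm
  calc ∑ t ∈ range n, ((n - 1 - t)/c + 1) * ((t + (m-2)).choose (m-2))
      = ∑ j ∈ range n, (j/c + 1) * (((n-j) + (m-3)).choose (m-2)) := by
        rw [← Finset.sum_range_reflect]
        apply Finset.sum_congr rfl
        intro j hj
        rw [mem_range] at hj
        have e1 : n - 1 - (n - 1 - j) = j := by omega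
        have e2 : (n - 1 - j) + (m-2) = (n - j) + (m-3) := by omega
        rw [e1, e2]
    _ = ∑ j ∈ range n, ∑ i ∈ range (n - j), (i + (m-3)).choose (m-3) * (j/c + 1) := by
        apply Finset.sum_congr rfl
        intro j _
        rw [← Finset.sum_mul, hockey]
        have e3 : m - 3 + 1 = m - 2 := by omega
        rw [e3, mul_comm]
    _ = ∑ i ∈ range n, ∑ j ∈ range (n - i), (i + (m-3)).choose (m-3) * (j/c + 1) :=
        (tri_swap (fun i => (i + (m-3)).choose (m-3)) (fun j => j/c + 1) n).symm
    _ = ∑ i ∈ range n, (m-3+i).choose i * ∑ j ∈ Icc 1 (n-i), ⌈(j : ℚ) / (c : ℚ)⌉₊ := by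
        apply Finset.sum_congr rfl
        intro i _
        rw [inner, csym, Finset.mul_sum]

lemma add2_lt {m : ℕ} (x : Fin (m-2)) : x.1 + 2 < m := by have := x.2; omega

lemma sub2_lt {m : ℕ} {x : Fin m} (h : 2 ≤ x.1) : x.1 - 2 < m - 2 := by have := x.2; omega

@[reducible] def fwd1 {m : ℕ} (u : Fin m → ℕ) : Fin (m-1) → ℕ :=
  fun x => u ⟨x.1, Nat.lt_of_lt_of_le x.2 (Nat.sub_le m 1)⟩

def bwd1 {m : ℕ} (v : Fin (m-1) → ℕ) : Fin m → ℕ :=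
  fun x => if h : x.1 < m - 1 then v ⟨x.1, h⟩ else 0

lemma bwd1_lt {m : ℕ} (v : Fin (m-1) → ℕ) (x : Fin m) (h : x.1 < m - 1) :
    bwd1 v x = v ⟨x.1, h⟩ := dif_pos h

lemma bwd1_ge {m : ℕ} (v : Fin (m-1) → ℕ) (x : Fin m) (h : ¬ x.1 < m - 1) :
    bwd1 v x = 0 := dif_neg h

@[reducible] def fwd2 {m : ℕ} (c : ℕ) (h0 : 0 < m) (h1 : 1 < m) (u : Fin m → ℕ) :
    Σ _ : ℕ, ℕ × (Fin (m-2) → ℕ) :=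
  ⟨u ⟨1, h1⟩ - 1,
    ((u ⟨0, h0⟩ - u ⟨1, h1⟩)/c, fun x => u ⟨x.1 + 2, add2_lt x⟩ - 1)⟩

def bwd2 {m : ℕ} (c : ℕ) (p : Σ _ : ℕ, ℕ × (Fin (m-2) → ℕ)) : Fin m → ℕ :=
  fun x => if x.1 = 0 then p.1 + 1 + p.2.1 * c
    else if h : 2 ≤ x.1 then p.2.2 ⟨x.1 - 2, sub2_lt h⟩ + 1 else p.1 + 1

lemma bwd2_zero {m : ℕ} (c : ℕ) (p : Σ _ : ℕ, ℕ × (Fin (m-2) → ℕ)) (x : Fin m)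
    (h : x.1 = 0) : bwd2 c p x = p.1 + 1 + p.2.1 * c := if_pos h

lemma bwd2_one {m : ℕ} (c : ℕ) (p : Σ _ : ℕ, ℕ × (Fin (m-2) → ℕ)) (x : Fin m)
    (h : x.1 = 1) : bwd2 c p x = p.1 + 1 := by
  have h0 : ¬ x.1 = 0 := by omega
  have h2 : ¬ 2 ≤ x.1 := by omega
  unfold bwd2
  rw [if_neg h0, dif_neg h2]

lemma bwd2_two {m : ℕ} (c : ℕ) (p : Σ _ : ℕ, ℕ × (Fin (m-2) → ℕ)) (x : Fin m)
    (h : 2 ≤ x.1) : bwd2 c p x = p.2.2 ⟨x.1 - 2, sub2_lt h⟩ + 1 := by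
  have h0 : ¬ x.1 = 0 := by omega
  unfold bwd2
  rw [if_neg h0, dif_pos h]

lemma bwd2_fwd2 {m : ℕ} (c : ℕ) (hm : 3 ≤ m) (hc : 1 ≤ c) (u : Fin m → ℕ)
    (ha : ∀ i j : Fin m, i ≤ j → u j ≤ u i)
    (hdvd : (u ⟨0, by omega⟩ - u ⟨1, by omega⟩) % c = 0)
    (hz : ¬ u ⟨m - 1, by omega⟩ = 0) :
    bwd2 c (fwd2 c (by omega) (by omega) u) = u := by
  have pm0 : 0 < m := by omega
  have pm1 : 1 < m := by omega
  have pml : m - 1 < m := by omega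
  have hpos : ∀ x : Fin m, 1 ≤ u x := by
    intro x
    have hx2 := x.2
    have hxle : x ≤ (⟨m - 1, pml⟩ : Fin m) :=
      Fin.le_def.mpr (show x.1 ≤ m - 1 by omega)
    have := ha x _ hxle
    omega
  have h01 : u ⟨1, pm1⟩ ≤ u ⟨0, pm0⟩ := by
    apply ha
    exact Fin.mk_le_mk.mpr (Nat.zero_le 1)
  have hdc : ((u ⟨0, pm0⟩ - u ⟨1, pm1⟩)/c) * c = u ⟨0, pm0⟩ - u ⟨1, pm1⟩ :=
    Nat.div_mul_cancel (Nat.dvd_of_mod_eq_zero hdvd)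
  funext x
  by_cases h0 : x.1 = 0
  · rw [bwd2_zero c _ x h0]
    have hx : x = ⟨0, pm0⟩ := Fin.ext h0
    show u ⟨1, pm1⟩ - 1 + 1 + ((u ⟨0, pm0⟩ - u ⟨1, pm1⟩)/c) * c = u x
    rw [hx, hdc]
    have := hpos ⟨1, pm1⟩
    omega
  · by_cases h2 : 2 ≤ x.1
    · rw [bwd2_two c _ x h2]
      show u ⟨x.1 - 2 + 2, add2_lt ⟨x.1 - 2, sub2_lt h2⟩⟩ - 1 + 1 = u x
      have hidx : (⟨x.1 - 2 + 2, add2_lt ⟨x.1 - 2, sub2_lt h2⟩⟩ : Fin m) = x :=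
        Fin.ext (show x.1 - 2 + 2 = x.1 by omega)
      rw [hidx]
      have := hpos x
      omega
    · have hx1 : x.1 = 1 := by omega
      rw [bwd2_one c _ x hx1]
      have hx : x = ⟨1, pm1⟩ := Fin.ext hx1
      show u ⟨1, pm1⟩ - 1 + 1 = u x
      rw [hx]
      have := hpos ⟨1, pm1⟩
      omega

lemma fwd2_bwd2 {m : ℕ} (c : ℕ) (hm : 3 ≤ m) (hc : 1 ≤ c) (t s : ℕ)
    (v : Fin (m-2) → ℕ) :
    fwd2 c (by omega) (by omega) (bwd2 c ⟨t, (s, v)⟩)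
      = (⟨t, (s, v)⟩ : Σ _ : ℕ, ℕ × (Fin (m-2) → ℕ)) := by
  have pm0 : 0 < m := by omega
  have pm1 : 1 < m := by omega
  have e0 : bwd2 c (⟨t, (s, v)⟩ : Σ _ : ℕ, ℕ × (Fin (m-2) → ℕ)) ⟨0, pm0⟩ = t + 1 + s * c :=
    bwd2_zero c _ _ rfl
  have e1 : bwd2 c (⟨t, (s, v)⟩ : Σ _ : ℕ, ℕ × (Fin (m-2) → ℕ)) ⟨1, pm1⟩ = t + 1 :=
    bwd2_one c _ _ rfl
  have efun : (fun x : Fin (m-2) =>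
      bwd2 c (⟨t, (s, v)⟩ : Σ _ : ℕ, ℕ × (Fin (m-2) → ℕ)) ⟨x.1 + 2, add2_lt x⟩ - 1) = v := by
    funext x
    have h2 : 2 ≤ ((⟨x.1 + 2, add2_lt x⟩ : Fin m)).1 := Nat.le_add_left 2 x.1
    rw [bwd2_two c (⟨t, (s, v)⟩ : Σ _ : ℕ, ℕ × (Fin (m-2) → ℕ)) (⟨x.1 + 2, add2_lt x⟩ : Fin m) h2]
    have hidx : (⟨((⟨x.1 + 2, add2_lt x⟩ : Fin m)).1 - 2, sub2_lt h2⟩ : Fin (m-2)) = x :=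
      Fin.ext (show x.1 + 2 - 2 = x.1 by omega)
    rw [hidx]
    exact Nat.add_sub_cancel (v x) 1
  show (⟨bwd2 c ⟨t, (s, v)⟩ ⟨1, pm1⟩ - 1,
    ((bwd2 c ⟨t, (s, v)⟩ ⟨0, pm0⟩ - bwd2 c ⟨t, (s, v)⟩ ⟨1, pm1⟩)/c,
      fun x : Fin (m-2) => bwd2 c ⟨t, (s, v)⟩ ⟨x.1 + 2, add2_lt x⟩ - 1)⟩
    : Σ _ : ℕ, ℕ × (Fin (m-2) → ℕ)) = ⟨t, (s, v)⟩
  rw [e0, e1, efun]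
  have e2 : t + 1 - 1 = t := rfl
  have e3 : (t + 1 + s * c - (t + 1))/c = s := by
    have e4 : t + 1 + s * c - (t + 1) = s * c := by omega
    rw [e4]
    exact Nat.mul_div_cancel s (by omega)
  rw [e2, e3]

lemma card1_key (m n : ℕ) (pml : m - 1 < m) :
    ((antiFinset m n).filter (fun u => u ⟨m - 1, pml⟩ = 0)).card
      = (antiFinset (m-1) n).card := by
  refine Finset.card_bij' (fun u _ => fwd1 u) (fun v _ => bwd1 v) ?hi ?hj ?li ?ri
  case hi =>
    intro u hu
    show fwd1 u ∈ antiFinset (m-1) n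
    rw [Finset.mem_filter, mem_antiFinset] at hu
    obtain ⟨⟨hb, ha⟩, _⟩ := hu
    rw [mem_antiFinset]
    constructor
    · intro x
      show u ⟨x.1, Nat.lt_of_lt_of_le x.2 (Nat.sub_le m 1)⟩ ≤ n
      exact hb _
    · intro x y hxy
      show u ⟨y.1, Nat.lt_of_lt_of_le y.2 (Nat.sub_le m 1)⟩
        ≤ u ⟨x.1, Nat.lt_of_lt_of_le x.2 (Nat.sub_le m 1)⟩
      exact ha _ _ (Fin.mk_le_mk.mpr (Fin.le_def.mp hxy))
  case hj =>
    intro v hv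
    show bwd1 v ∈ (antiFinset m n).filter (fun u => u ⟨m - 1, pml⟩ = 0)
    rw [mem_antiFinset] at hv
    obtain ⟨hb, ha⟩ := hv
    rw [Finset.mem_filter, mem_antiFinset]
    refine ⟨⟨?_, ?_⟩, ?_⟩
    · intro x
      by_cases h : x.1 < m - 1
      · rw [bwd1_lt v x h]; exact hb _
      · rw [bwd1_ge v x h]; exact Nat.zero_le n
    · intro x y hxy
      by_cases hy : y.1 < m - 1
      · have hx : x.1 < m - 1 := by have := Fin.le_def.mp hxy; omega
        rw [bwd1_lt v x hx, bwd1_lt v y hy]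
        have hle : (⟨x.1, hx⟩ : Fin (m-1)) ≤ ⟨y.1, hy⟩ :=
          Fin.mk_le_mk.mpr (Fin.le_def.mp hxy)
        exact ha _ _ hle
      · rw [bwd1_ge v y hy]; exact Nat.zero_le _
    · exact bwd1_ge v ⟨m-1, pml⟩ (lt_irrefl (m-1))
  case li =>
    intro u hu
    show bwd1 (fwd1 u) = u
    rw [Finset.mem_filter, mem_antiFinset] at hu
    obtain ⟨⟨hb, ha⟩, hz⟩ := hu
    funext x
    by_cases h : x.1 < m - 1
    · exact (bwd1_lt (fwd1 u) x h).trans (congrArg u (Fin.ext rfl))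
    · rw [bwd1_ge _ x h]
      have hx : x = ⟨m - 1, pml⟩ := Fin.ext (show x.1 = m - 1 by have := x.2; omega)
      rw [hx]
      exact hz.symm
  case ri =>
    intro v hv
    show fwd1 (bwd1 v) = v
    funext x
    exact (bwd1_lt v ⟨x.1, Nat.lt_of_lt_of_le x.2 (Nat.sub_le m 1)⟩ x.2).trans
      (congrArg v (Fin.ext rfl))

lemma card2_key (m c n : ℕ) (hm3 : 3 ≤ m) (hc : 1 ≤ c) (hn1 : 1 ≤ n)
    (pm0 : 0 < m) (pm1 : 1 < m) (pml : m - 1 < m) :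
    ((antiFinset m n).filter
        (fun u => (u ⟨0, pm0⟩ - u ⟨1, pm1⟩) % c = 0 ∧ ¬ u ⟨m - 1, pml⟩ = 0)).card
      = ((Finset.range n).sigma
          (fun t => Finset.range ((n - 1 - t)/c + 1) ×ˢ antiFinset (m-2) t)).card := by
  refine Finset.card_bij' (fun u _ => fwd2 c pm0 pm1 u) (fun p _ => bwd2 c p)
    ?hi ?hj ?li ?ri
  case hi =>
    intro u hu
    show fwd2 c pm0 pm1 u ∈ (Finset.range n).sigma
      (fun t => Finset.range ((n - 1 - t)/c + 1) ×ˢ antiFinset (m-2) t)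
    rw [Finset.mem_filter, mem_antiFinset] at hu
    obtain ⟨⟨hb, ha⟩, hdvd, hz⟩ := hu
    have hpos : ∀ x : Fin m, 1 ≤ u x := by
      intro x
      have hx2 := x.2
      have hxle : x ≤ (⟨m - 1, pml⟩ : Fin m) :=
        Fin.le_def.mpr (show x.1 ≤ m - 1 by omega)
      have := ha x _ hxle
      omega
    have h1 : 1 ≤ u ⟨1, pm1⟩ := hpos _
    have h01 : u ⟨1, pm1⟩ ≤ u ⟨0, pm0⟩ := ha _ _ (Fin.mk_le_mk.mpr (Nat.zero_le 1))
    rw [Finset.mem_sigma, Finset.mem_product]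
    refine ⟨?_, ?_, ?_⟩
    · rw [Finset.mem_range]
      show u ⟨1, pm1⟩ - 1 < n
      have := hb ⟨1, pm1⟩
      omega
    · rw [Finset.mem_range, Nat.lt_succ_iff]
      show (u ⟨0, pm0⟩ - u ⟨1, pm1⟩)/c ≤ (n - 1 - (u ⟨1, pm1⟩ - 1))/c
      have e : n - 1 - (u ⟨1, pm1⟩ - 1) = n - u ⟨1, pm1⟩ := by omega
      rw [e]
      exact Nat.div_le_div_right (by have := hb ⟨0, pm0⟩; omega)
    · rw [mem_antiFinset]
      constructor
      · intro x
        show u ⟨x.1 + 2, add2_lt x⟩ - 1 ≤ u ⟨1, pm1⟩ - 1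
        have := ha ⟨1, pm1⟩ ⟨x.1 + 2, add2_lt x⟩
          (Fin.mk_le_mk.mpr (Nat.le_add_left 1 (x.1 + 1)))
        omega
      · intro x y hxy
        show u ⟨y.1 + 2, add2_lt y⟩ - 1 ≤ u ⟨x.1 + 2, add2_lt x⟩ - 1
        have := ha ⟨x.1 + 2, add2_lt x⟩ ⟨y.1 + 2, add2_lt y⟩
          (Fin.mk_le_mk.mpr (Nat.add_le_add_right (Fin.le_def.mp hxy) 2))
        omega
  case hj =>
    rintro ⟨t, s, v⟩ hp
    show bwd2 c ⟨t, (s, v)⟩ ∈ (antiFinset m n).filter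
      (fun u => (u ⟨0, pm0⟩ - u ⟨1, pm1⟩) % c = 0 ∧ ¬ u ⟨m - 1, pml⟩ = 0)
    rw [Finset.mem_sigma, Finset.mem_range, Finset.mem_product, Finset.mem_range,
      Nat.lt_succ_iff, mem_antiFinset] at hp
    dsimp only at hp
    obtain ⟨ht, hs, hvb, hva⟩ := hp
    have hsc : s * c ≤ n - 1 - t := (Nat.le_div_iff_mul_le (by omega)).mp hs
    rw [Finset.mem_filter, mem_antiFinset]
    have hbnd : ∀ z : Fin m, ¬ z.1 = 0 →
        bwd2 c (⟨t, (s, v)⟩ : Σ _ : ℕ, ℕ × (Fin (m-2) → ℕ)) z ≤ t + 1 := by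
      intro z hz0
      by_cases hz2 : 2 ≤ z.1
      · rw [bwd2_two c _ z hz2]
        have := hvb ⟨z.1 - 2, sub2_lt hz2⟩
        show v ⟨z.1 - 2, sub2_lt hz2⟩ + 1 ≤ t + 1
        omega
      · have hz1 : z.1 = 1 := by omega
        exact le_of_eq (bwd2_one c _ z hz1)
    refine ⟨⟨?_, ?_⟩, ?_, ?_⟩
    · intro x
      by_cases h0 : x.1 = 0
      · rw [bwd2_zero c _ x h0]
        show t + 1 + s * c ≤ n
        omega
      · have := hbnd x h0
        omega
    · intro x y hxy
      have hxy' : x.1 ≤ y.1 := Fin.le_def.mp hxy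
      by_cases hx0 : x.1 = 0
      · rw [bwd2_zero c _ x hx0]
        by_cases hy0 : y.1 = 0
        · exact le_of_eq (bwd2_zero c _ y hy0)
        · have := hbnd y hy0
          show bwd2 c _ y ≤ t + 1 + s * c
          omega
      · have hy0 : ¬ y.1 = 0 := by omega
        by_cases hx2 : 2 ≤ x.1
        · have hy2 : 2 ≤ y.1 := by omega
          rw [bwd2_two c _ x hx2, bwd2_two c _ y hy2]
          have := hva ⟨x.1 - 2, sub2_lt hx2⟩ ⟨y.1 - 2, sub2_lt hy2⟩
            (Fin.mk_le_mk.mpr (Nat.sub_le_sub_right hxy' 2))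
          show v ⟨y.1 - 2, sub2_lt hy2⟩ + 1 ≤ v ⟨x.1 - 2, sub2_lt hx2⟩ + 1
          omega
        · have hx1 : x.1 = 1 := by omega
          rw [bwd2_one c _ x hx1]
          show bwd2 c (⟨t, (s, v)⟩ : Σ _ : ℕ, ℕ × (Fin (m-2) → ℕ)) y ≤ t + 1
          exact hbnd y hy0
    · rw [bwd2_zero c _ ⟨0, pm0⟩ rfl, bwd2_one c _ ⟨1, pm1⟩ rfl]
      show (t + 1 + s * c - (t + 1)) % c = 0
      have e : t + 1 + s * c - (t + 1) = s * c := by omega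
      rw [e]
      exact Nat.mul_mod_left s c
    · have hm2' : 2 ≤ (m : ℕ) - 1 := by omega
      rw [bwd2_two c _ (⟨m - 1, pml⟩ : Fin m) hm2']
      show ¬ v ⟨m - 1 - 2, sub2_lt (x := (⟨m - 1, pml⟩ : Fin m)) hm2'⟩ + 1 = 0
      omega
  case li =>
    intro u hu
    show bwd2 c (fwd2 c pm0 pm1 u) = u
    rw [Finset.mem_filter, mem_antiFinset] at hu
    obtain ⟨⟨hb, ha⟩, hdvd, hz⟩ := hu
    exact bwd2_fwd2 c (by omega) hc u ha hdvd hz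
  case ri =>
    rintro ⟨t, s, v⟩ hp
    show fwd2 c pm0 pm1 (bwd2 c ⟨t, (s, v)⟩) = (⟨t, (s, v)⟩ : Σ _ : ℕ, ℕ × (Fin (m-2) → ℕ))
    exact fwd2_bwd2 c (by omega) hc t s v

lemma card1_val (k m n : ℕ) (hmk : m < k) (hm : 2 < m) (hn : n = k - m) (pml : m - 1 < m) :
    ((antiFinset m n).filter (fun u => u ⟨m - 1, pml⟩ = 0)).card
      = (k-1).choose (m-1) := by
  rw [card1_key m n pml, card_antiFinset]
  have e6 : n + (m - 1) = k - 1 := by omega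
  rw [e6]

lemma card2_val (m c n : ℕ) (hm3 : 3 ≤ m) (hc : 1 ≤ c) (hn1 : 1 ≤ n)
    (pm0 : 0 < m) (pm1 : 1 < m) (pml : m - 1 < m) :
    ((antiFinset m n).filter
        (fun u => (u ⟨0, pm0⟩ - u ⟨1, pm1⟩) % c = 0 ∧ ¬ u ⟨m - 1, pml⟩ = 0)).card
      = ∑ i ∈ Finset.range n, (m-3+i).choose i * ∑ j ∈ Finset.Icc 1 (n-i), ⌈(j : ℚ) / (c : ℚ)⌉₊ := by
  rw [card2_key m c n hm3 hc hn1 pm0 pm1 pml, Finset.card_sigma]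
  have e5 : ∀ t ∈ Finset.range n,
      (Finset.range ((n - 1 - t)/c + 1) ×ˢ antiFinset (m-2) t).card
      = ((n - 1 - t)/c + 1) * ((t + (m-2)).choose (m-2)) := by
    intro t _
    rw [Finset.card_product, Finset.card_range, card_antiFinset]
  rw [Finset.sum_congr rfl e5]
  exact main_id c hc m n hm3


/-- `Ucset k m c` : states of the compressed automaton, i.e. the elements `u ∈ U`
such that `(u₁ - u₂) mod c = 0` or `u_m = 0`. -/
def Ucset (k m c : ℕ) (hm : 2 ≤ m) : Set (Fin m → ℕ) :=
  {u | u ∈ Uset k m ∧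
    ((u ⟨0, by omega⟩ - u ⟨1, by omega⟩) % c = 0 ∨ u ⟨m - 1, by omega⟩ = 0)}

/-- For `m > 2`, the compressed state set `U_c` has cardinality
`C(k-1, m-1) + Σ_{i=0}^{k-m-1} C(m-3+i, i) · Σ_{j=1}^{k-m-i} ⌈j/c⌉`. -/
theorem card_Ucset (k m c : ℕ) (hm : 2 < m) (hmk : m < k) (hc : 1 ≤ c) :
    Nat.card (Ucset k m c (by omega)) =
      Nat.choose (k - 1) (m - 1) +
        ∑ i ∈ Finset.range (k - m),
          Nat.choose (m - 3 + i) i *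
            ∑ j ∈ Finset.Icc 1 (k - m - i), ⌈(j : ℚ) / (c : ℚ)⌉₊ := by
  have pm0 : 0 < m := by omega
  have pm1 : 1 < m := by omega
  have pml : m - 1 < m := by omega
  set n := k - m with hn
  have hn1 : 1 ≤ n := by omega
  set F : Finset (Fin m → ℕ) := (antiFinset m n).filter
      (fun u => (u ⟨0, pm0⟩ - u ⟨1, pm1⟩) % c = 0 ∨ u ⟨m - 1, pml⟩ = 0)
    with hF
  -- Step 1 : Ucset = ↑F
  have hset : Ucset k m c (by omega) = (↑F : Set (Fin m → ℕ)) := by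
    ext u
    simp only [Ucset, Uset, Set.mem_setOf_eq, hF, Finset.coe_filter, mem_antiFinset]
    all_goals tauto
  rw [hset, Nat.card_coe_set_eq, Set.ncard_coe_finset]
  -- Step 2 : split on whether the last entry is zero
  have hsplit := Finset.card_filter_add_card_filter_not
    (s := F) (p := fun u => u ⟨m - 1, pml⟩ = 0)
  have e1 : F.filter (fun u => u ⟨m - 1, pml⟩ = 0)
      = (antiFinset m n).filter (fun u => u ⟨m - 1, pml⟩ = 0) := by
    rw [hF, Finset.filter_filter]
    apply Finset.filter_congr
    intro u _
    beta_reduce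
    tauto
  have e2 : F.filter (fun u => ¬ u ⟨m - 1, pml⟩ = 0)
      = (antiFinset m n).filter
        (fun u => (u ⟨0, pm0⟩ - u ⟨1, pm1⟩) % c = 0 ∧ ¬ u ⟨m - 1, pml⟩ = 0) := by
    rw [hF, Finset.filter_filter]
    apply Finset.filter_congr
    intro u _
    beta_reduce
    tauto
  rw [e1, e2] at hsplit
  rw [← hsplit]
  clear hsplit hset e1 e2 hF F
  rw [card1_val k m n hmk hm hn pml]
  congr 1
  exact card2_val m c n (by omega) hc hn1 pm0 pm1 pml
end

section
/- Let A be an n×n primitive real matrix, λ > 0 a real number, and x, y entrywise strictly positive vectors in ℝ^n with A x = λ x and Aᵀ y = λ y. Then for every entrywise nonnegative vector t ∈ ℝ^n with t ≠ 0, the sequence A^k t / λ^k converges as k → ∞ to the vector ((yᵀ t)/(yᵀ x)) x, which is entrywise nonnegative and not the zero vector. -/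
open Matrix Filter

/-- Perron limit of powers applied to a nonnegative vector: if `A` is primitive
with Perron eigenvalue `λ > 0` and strictly positive right and left eigenvectors
`x` and `y`, then for every nonnegative nonzero `t`, `A^k t / λ^k` converges to
`((yᵀ t)/(yᵀ x)) • x`, which is entrywise nonnegative and nonzero. -/
theorem perron_limit_of_powers (n : ℕ) (A : Matrix (Fin n) (Fin n) ℝ) (lam : ℝ)
    (x y : Fin n → ℝ)
    (hA0 : ∀ i j, 0 ≤ A i j)
    (hprim : ∃ K : ℕ, 1 ≤ K ∧ ∀ i j, 0 < (A ^ K) i j)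
    (hlam : 0 < lam)
    (hx : ∀ i, 0 < x i) (hy : ∀ i, 0 < y i)
    (hAx : A.mulVec x = lam • x) (hAy : Aᵀ.mulVec y = lam • y)
    (t : Fin n → ℝ) (ht0 : ∀ i, 0 ≤ t i) (htne : t ≠ 0) :
    Tendsto (fun k : ℕ => (lam ^ k)⁻¹ • (A ^ k).mulVec t) atTop
        (nhds ((y ⬝ᵥ t / (y ⬝ᵥ x)) • x)) ∧
      (∀ i, 0 ≤ ((y ⬝ᵥ t / (y ⬝ᵥ x)) • x) i) ∧
      (y ⬝ᵥ t / (y ⬝ᵥ x)) • x ≠ 0 := by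
  obtain ⟨K, hK1, hKpos⟩ := hprim
  have hne : ∃ i, t i ≠ 0 := by
    by_contra h; push_neg at h; exact htne (funext h)
  obtain ⟨i0, hi0⟩ := hne
  have hi0pos : 0 < t i0 := lt_of_le_of_ne (ht0 i0) (Ne.symm hi0)
  haveI : Nonempty (Fin n) := ⟨i0⟩
  have hun : (Finset.univ : Finset (Fin n)).Nonempty := Finset.univ_nonempty
  have hyx : 0 < y ⬝ᵥ x :=
    Finset.sum_pos (fun i _ => mul_pos (hy i) (hx i)) hun
  have hyt : 0 < y ⬝ᵥ t :=
    Finset.sum_pos' (fun i _ => mul_nonneg (hy i).le (ht0 i))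
      ⟨i0, Finset.mem_univ _, mul_pos (hy i0) hi0pos⟩
  set c0 : ℝ := y ⬝ᵥ t / (y ⬝ᵥ x) with hc0def
  have hc0pos : 0 < c0 := div_pos hyt hyx
  -- nonnegativity of entries of A^p
  have hpow0 : ∀ (p : ℕ) (i j : Fin n), 0 ≤ (A ^ p) i j := by
    intro p
    induction p with
    | zero =>
      intro i j
      rw [pow_zero]
      by_cases h : i = j <;> simp [Matrix.one_apply, h]
    | succ p ih =>
      intro i j
      rw [pow_succ, Matrix.mul_apply]
      exact Finset.sum_nonneg fun k _ => mul_nonneg (ih i k) (hA0 k j)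
  -- eigenvector for powers
  have hpowx : ∀ p : ℕ, (A ^ p).mulVec x = (lam ^ p) • x := by
    intro p
    induction p with
    | zero => simp
    | succ p ih =>
      rw [pow_succ, ← mulVec_mulVec, hAx, mulVec_smul, ih, smul_smul, pow_succ, mul_comm]
  -- the normalized iterates
  set u : ℕ → Fin n → ℝ := fun k => (lam ^ k)⁻¹ • (A ^ k).mulVec t with hudef
  have hu : ∀ k p : ℕ, u (k + p) = (lam ^ p)⁻¹ • (A ^ p).mulVec (u k) := by
    intro k p
    simp only [hudef]
    rw [mulVec_smul, mulVec_mulVec, ← pow_add, smul_smul, ← mul_inv, ← pow_add,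
      add_comm p k]
  -- ratios
  set r : ℕ → Fin n → ℝ := fun k i => u k i / x i with hrdef
  have hur : ∀ k i, u k i = r k i * x i := fun k i =>
    (div_mul_cancel₀ _ (hx i).ne').symm
  -- weights
  set W : ℕ → Fin n → Fin n → ℝ := fun p i j => (A ^ p) i j * x j / (lam ^ p * x i)
    with hWdef
  have hlp : ∀ p : ℕ, 0 < lam ^ p := fun p => pow_pos hlam p
  have hW0 : ∀ p i j, 0 ≤ W p i j := fun p i j =>
    div_nonneg (mul_nonneg (hpow0 p i j) (hx j).le) (mul_pos (hlp p) (hx i)).le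
  have hWsum : ∀ p i, ∑ j, W p i j = 1 := by
    intro p i
    have hrow : ∑ j, (A ^ p) i j * x j = lam ^ p * x i := by
      have := congrFun (hpowx p) i
      simpa [mulVec, dotProduct] using this
    simp only [hWdef]
    rw [← Finset.sum_div, hrow, div_self (mul_pos (hlp p) (hx i)).ne']
  have hr : ∀ k p i, r (k + p) i = ∑ j, W p i j * r k j := by
    intro k p i
    have h1 := congrFun (hu k p) i
    simp only [Pi.smul_apply, smul_eq_mul, mulVec, dotProduct] at h1
    simp only [hrdef, hWdef, h1]
    rw [Finset.mul_sum, Finset.sum_div]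
    refine Finset.sum_congr rfl fun j _ => ?_
    field_simp [(hx i).ne', (hx j).ne', (hlp p).ne']
  -- max and min ratios
  set M : ℕ → ℝ := fun k => Finset.univ.sup' hun (r k) with hMdef
  set m : ℕ → ℝ := fun k => Finset.univ.inf' hun (r k) with hmdef
  have hrleM : ∀ k i, r k i ≤ M k := fun k i => Finset.le_sup' (r k) (Finset.mem_univ i)
  have hmler : ∀ k i, m k ≤ r k i := fun k i => Finset.inf'_le (r k) (Finset.mem_univ i)
  have hmM : ∀ k, m k ≤ M k := fun k => (hmler k i0).trans (hrleM k i0)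
  -- weighted averages stay within bounds
  have havg_le : ∀ (w : Fin n → ℝ), (∀ j, 0 ≤ w j) → ∀ (v : Fin n → ℝ) (B : ℝ),
      (∀ j, v j ≤ B) → ∑ j, w j * v j ≤ (∑ j, w j) * B := by
    intro w hw v B hv
    rw [Finset.sum_mul]
    exact Finset.sum_le_sum fun j _ => mul_le_mul_of_nonneg_left (hv j) (hw j)
  have havg_ge : ∀ (w : Fin n → ℝ), (∀ j, 0 ≤ w j) → ∀ (v : Fin n → ℝ) (B : ℝ),
      (∀ j, B ≤ v j) → (∑ j, w j) * B ≤ ∑ j, w j * v j := by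
    intro w hw v B hv
    rw [Finset.sum_mul]
    exact Finset.sum_le_sum fun j _ => mul_le_mul_of_nonneg_left (hv j) (hw j)
  have hMle : ∀ k p, M (k + p) ≤ M k := by
    intro k p
    refine Finset.sup'_le _ _ fun i _ => ?_
    rw [hr k p i]
    calc ∑ j, W p i j * r k j ≤ (∑ j, W p i j) * M k :=
          havg_le _ (hW0 p i) _ _ (hrleM k)
      _ = M k := by rw [hWsum p i, one_mul]
  have hmge : ∀ k p, m k ≤ m (k + p) := by
    intro k p
    refine Finset.le_inf' _ _ fun i _ => ?_
    rw [hr k p i]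
    calc m k = (∑ j, W p i j) * m k := by rw [hWsum p i, one_mul]
      _ ≤ ∑ j, W p i j * r k j := havg_ge _ (hW0 p i) _ _ (hmler k)
  -- the contraction constant
  set δ : ℝ := Finset.univ.inf' hun (fun i => Finset.univ.inf' hun (fun j => W K i j))
    with hδdef
  have hWKpos : ∀ i j, 0 < W K i j := fun i j =>
    div_pos (mul_pos (hKpos i j) (hx j)) (mul_pos (hlp K) (hx i))
  have hδpos : 0 < δ := by
    rw [hδdef]
    rw [Finset.lt_inf'_iff]
    intro i _
    rw [Finset.lt_inf'_iff]
    intro j _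
    exact hWKpos i j
  have hδle : ∀ i j, δ ≤ W K i j := by
    intro i j
    calc δ ≤ Finset.univ.inf' hun (fun j => W K i j) :=
          Finset.inf'_le _ (Finset.mem_univ i)
      _ ≤ W K i j := Finset.inf'_le _ (Finset.mem_univ j)
  -- one-sided contraction estimates
  have hcon_key : ∀ (k : ℕ) (i : Fin n) (j₀ : Fin n),
      ∑ j, W K i j * r k j ≤ (1 - δ) * M k + δ * r k j₀ := by
    intro k i j₀
    have hsplit : ∑ j, W K i j * r k j
        = (∑ j, (W K i j - if j = j₀ then δ else 0) * r k j) + δ * r k j₀ := by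
      have hterm : ∀ j ∈ Finset.univ,
          (W K i j - if j = j₀ then δ else 0) * r k j
            = W K i j * r k j - (if j = j₀ then δ * r k j else 0) := by
        intro j _
        by_cases h : j = j₀ <;> simp [h] <;> ring
      rw [Finset.sum_congr rfl hterm, Finset.sum_sub_distrib,
        Finset.sum_ite_eq' Finset.univ j₀ (fun j => δ * r k j)]
      simp
    rw [hsplit]
    have hwnn : ∀ j, 0 ≤ W K i j - if j = j₀ then δ else 0 := by
      intro j
      by_cases h : j = j₀ <;> simp [h, sub_nonneg, hδle i j₀, (hW0 K i j)]
    have hwsum : ∑ j, (W K i j - if j = j₀ then δ else 0) = 1 - δ := by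
      rw [Finset.sum_sub_distrib, hWsum,
        Finset.sum_ite_eq' Finset.univ j₀ (fun _ => δ)]
      simp
    have := havg_le _ hwnn (r k) (M k) (hrleM k)
    rw [hwsum] at this
    linarith
  have hcon_key' : ∀ (k : ℕ) (i : Fin n) (j₀ : Fin n),
      (1 - δ) * m k + δ * r k j₀ ≤ ∑ j, W K i j * r k j := by
    intro k i j₀
    have hsplit : ∑ j, W K i j * r k j
        = (∑ j, (W K i j - if j = j₀ then δ else 0) * r k j) + δ * r k j₀ := by
      have hterm : ∀ j ∈ Finset.univ,
          (W K i j - if j = j₀ then δ else 0) * r k j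
            = W K i j * r k j - (if j = j₀ then δ * r k j else 0) := by
        intro j _
        by_cases h : j = j₀ <;> simp [h] <;> ring
      rw [Finset.sum_congr rfl hterm, Finset.sum_sub_distrib,
        Finset.sum_ite_eq' Finset.univ j₀ (fun j => δ * r k j)]
      simp
    rw [hsplit]
    have hwnn : ∀ j, 0 ≤ W K i j - if j = j₀ then δ else 0 := by
      intro j
      by_cases h : j = j₀ <;> simp [h, sub_nonneg, hδle i j₀, (hW0 K i j)]
    have hwsum : ∑ j, (W K i j - if j = j₀ then δ else 0) = 1 - δ := by
      rw [Finset.sum_sub_distrib, hWsum,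
        Finset.sum_ite_eq' Finset.univ j₀ (fun _ => δ)]
      simp
    have := havg_ge _ hwnn (r k) (m k) (hmler k)
    rw [hwsum] at this
    linarith
  have hMK : ∀ k, M (k + K) ≤ (1 - δ) * M k + δ * m k := by
    intro k
    obtain ⟨j₀, _, hj₀⟩ := Finset.exists_mem_eq_inf' hun (r k)
    refine Finset.sup'_le _ _ fun i _ => ?_
    rw [hr k K i]
    have := hcon_key k i j₀
    rw [← hj₀] at this
    exact this
  have hmK : ∀ k, (1 - δ) * m k + δ * M k ≤ m (k + K) := by
    intro k
    obtain ⟨j₀, _, hj₀⟩ := Finset.exists_mem_eq_sup' hun (r k)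
    refine Finset.le_inf' _ _ fun i _ => ?_
    rw [hr k K i]
    have := hcon_key' k i j₀
    rw [← hj₀] at this
    exact this
  -- the gap
  set D : ℕ → ℝ := fun k => M k - m k with hDdef
  have hD0 : ∀ k, 0 ≤ D k := fun k => sub_nonneg.mpr (hmM k)
  set q : ℝ := max (1 - 2 * δ) 0 with hqdef
  have hq0 : 0 ≤ q := le_max_right _ _
  have hq1 : q < 1 := max_lt (by linarith) one_pos
  have hDK : ∀ k, D (k + K) ≤ q * D k := by
    intro k
    have h1 := hMK k
    have h2 := hmK k
    have h3 : D (k + K) ≤ (1 - 2 * δ) * D k := by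
      simp only [hDdef]
      nlinarith
    calc D (k + K) ≤ (1 - 2 * δ) * D k := h3
      _ ≤ q * D k := mul_le_mul_of_nonneg_right (le_max_left _ _) (hD0 k)
  have hDgeo : ∀ j : ℕ, D (j * K) ≤ q ^ j * D 0 := by
    intro j
    induction j with
    | zero => simp
    | succ j ih =>
      calc D ((j + 1) * K) = D (j * K + K) := by ring_nf
        _ ≤ q * D (j * K) := hDK _
        _ ≤ q * (q ^ j * D 0) := mul_le_mul_of_nonneg_left ih hq0
        _ = q ^ (j + 1) * D 0 := by ring
  -- monotonicity and limits
  have hManti : Antitone M := by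
    intro a b hab
    have : b = a + (b - a) := by omega
    rw [this]
    exact hMle a (b - a)
  have hmmono : Monotone m := by
    intro a b hab
    have : b = a + (b - a) := by omega
    rw [this]
    exact hmge a (b - a)
  have hMbdd : BddBelow (Set.range M) := by
    refine ⟨m 0, fun z hz => ?_⟩
    obtain ⟨k, rfl⟩ := hz
    exact (hmmono (Nat.zero_le k)).trans (hmM k)
  have hmbdd : BddAbove (Set.range m) := by
    refine ⟨M 0, fun z hz => ?_⟩
    obtain ⟨k, rfl⟩ := hz
    exact (hmM k).trans (hManti (Nat.zero_le k))
  have hMt : Tendsto M atTop (nhds (⨅ k, M k)) := tendsto_atTop_ciInf hManti hMbdd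
  have hmt : Tendsto m atTop (nhds (⨆ k, m k)) := tendsto_atTop_ciSup hmmono hmbdd
  set cM : ℝ := ⨅ k, M k with hcMdef
  set cm : ℝ := ⨆ k, m k with hcmdef
  have hcmM : cm ≤ cM := le_of_tendsto_of_tendsto' hmt hMt hmM
  -- the gap tends to zero along multiples of K, hence cm = cM
  have hjK : Tendsto (fun j : ℕ => j * K) atTop atTop := by
    refine tendsto_atTop_mono (fun j => ?_) tendsto_id
    calc (j : ℕ) = j * 1 := (mul_one j).symm
      _ ≤ j * K := Nat.mul_le_mul_left j hK1
  have hsub : Tendsto (fun j : ℕ => D (j * K)) atTop (nhds (cM - cm)) :=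
    (hMt.sub hmt).comp hjK
  have hqlim : Tendsto (fun j : ℕ => q ^ j * D 0) atTop (nhds 0) := by
    have := (tendsto_pow_atTop_nhds_zero_of_lt_one hq0 hq1).mul_const (D 0)
    simpa using this
  have hle0 : cM - cm ≤ 0 := le_of_tendsto_of_tendsto' hsub hqlim hDgeo
  have hcMcm : cM = cm := le_antisymm (by linarith) hcmM
  -- coordinatewise squeeze
  have hr_lim : ∀ i, Tendsto (fun k => r k i) atTop (nhds cM) := by
    intro i
    refine tendsto_of_tendsto_of_tendsto_of_le_of_le (hcMcm ▸ hmt) hMt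
      (fun k => hmler k i) (fun k => hrleM k i)
  have hu_lim : Tendsto u atTop (nhds (cM • x)) := by
    rw [tendsto_pi_nhds]
    intro i
    have h1 := (hr_lim i).mul_const (x i)
    have h2 : (fun k => r k i * x i) = fun k => u k i := by
      funext k; rw [← hur]
    rw [h2] at h1
    simpa using h1
  -- conservation of the y-functional
  have hdot : ∀ k, y ⬝ᵥ u k = y ⬝ᵥ t := by
    intro k
    induction k with
    | zero => simp [hudef]
    | succ k ih =>
      have h1 : u (k + 1) = (lam ^ 1)⁻¹ • (A ^ 1).mulVec (u k) := hu k 1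
      rw [h1, pow_one, pow_one, dotProduct_smul, dotProduct_mulVec,
        ← mulVec_transpose, hAy, smul_dotProduct, smul_eq_mul, smul_eq_mul,
        ← mul_assoc, inv_mul_cancel₀ hlam.ne', one_mul, ih]
  have hdot_lim : Tendsto (fun k => y ⬝ᵥ u k) atTop (nhds (y ⬝ᵥ (cM • x))) := by
    have : ∀ v : Fin n → ℝ, y ⬝ᵥ v = ∑ i, y i * v i := fun v => rfl
    simp only [this]
    refine tendsto_finset_sum _ fun i _ => ?_
    exact (tendsto_const_nhds.mul ((tendsto_pi_nhds.mp hu_lim) i))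
  have hconst : Tendsto (fun k => y ⬝ᵥ u k) atTop (nhds (y ⬝ᵥ t)) := by
    simp only [hdot]
    exact tendsto_const_nhds
  have heq : y ⬝ᵥ t = y ⬝ᵥ (cM • x) := tendsto_nhds_unique hconst hdot_lim
  have hcMc0 : cM = c0 := by
    rw [dotProduct_smul, smul_eq_mul] at heq
    rw [hc0def, heq, mul_div_cancel_right₀ _ hyx.ne']
  refine ⟨?_, ?_, ?_⟩
  · rw [← hcMc0]
    exact hu_lim
  · intro i
    simp only [Pi.smul_apply, smul_eq_mul, ← hc0def]
    exact mul_nonneg hc0pos.le (hx i).le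
  · intro h
    have := congrFun h i0
    simp only [Pi.smul_apply, smul_eq_mul, Pi.zero_apply] at this
    exact (mul_pos hc0pos (hx i0)).ne' this
end

section
/- Let A be an n×n primitive real matrix, λ > 0 a real number, and x, y entrywise strictly positive vectors in ℝ^n with A x = λ x and Aᵀ y = λ y. Then for every entrywise nonnegative vector t ∈ ℝ^n with t ≠ 0 and any norm ‖·‖ on ℝ^n, the ratio ‖A^{k+1} t‖ / ‖A^k t‖ converges to λ as k → ∞. -/
open Matrix Filter

section Aux

variable {n : ℕ}

/-- triangle inequality for sums -/
lemma nrm_sum_le (nrm : (Fin n → ℝ) → ℝ)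
    (h0 : nrm 0 = 0)
    (htri : ∀ v w, nrm (v + w) ≤ nrm v + nrm w)
    (s : Finset (Fin n)) (f : Fin n → (Fin n → ℝ)) :
    nrm (∑ i ∈ s, f i) ≤ ∑ i ∈ s, nrm (f i) := by
  classical
  induction s using Finset.cons_induction with
  | empty => simp [h0]
  | cons a s ha ih =>
    rw [Finset.sum_cons, Finset.sum_cons]
    exact le_trans (htri _ _) (by linarith)

lemma perron_aux (npos : 0 < n) (A : Matrix (Fin n) (Fin n) ℝ) (lam : ℝ)
    (x : Fin n → ℝ) (K : ℕ)
    (hA0 : ∀ i j, 0 ≤ A i j)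
    (hB : ∀ i j, 0 < (A ^ K) i j)
    (hlam : 0 < lam)
    (hx : ∀ i, 0 < x i)
    (hAx : A.mulVec x = lam • x)
    (t : Fin n → ℝ) (ht : ∀ i, 0 < t i)
    (nrm : (Fin n → ℝ) → ℝ)
    (hdef : ∀ v, nrm v = 0 ↔ v = 0)
    (hhom : ∀ (a : ℝ) (v : Fin n → ℝ), nrm (a • v) = |a| * nrm v)
    (htri : ∀ v w, nrm (v + w) ≤ nrm v + nrm w) :
    Tendsto (fun k : ℕ => nrm ((A ^ (k + 1)).mulVec t) / nrm ((A ^ k).mulVec t))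
      atTop (nhds lam) := by
  classical
  haveI : NeZero n := ⟨npos.ne'⟩
  have hne : (Finset.univ : Finset (Fin n)).Nonempty := Finset.univ_nonempty
  -- basic nrm facts
  have h0 : nrm 0 = 0 := (hdef 0).2 rfl
  have hneg : ∀ v, nrm (-v) = nrm v := by
    intro v
    have := hhom (-1) v
    simpa using this
  have hnonneg : ∀ v, 0 ≤ nrm v := by
    intro v
    have h := htri v (-v)
    rw [add_neg_cancel, h0, hneg] at h
    linarith
  -- eigen equation for powers
  have hpow : ∀ k : ℕ, (A ^ k).mulVec x = (lam ^ k) • x := by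
    intro k
    induction k with
    | zero => simp
    | succ k ih =>
      rw [pow_succ', ← Matrix.mulVec_mulVec, ih, Matrix.mulVec_smul, hAx,
        smul_smul, pow_succ']
      ring_nf
  -- min/max ratios
  set m : (Fin n → ℝ) → ℝ := fun v => Finset.univ.inf' hne (fun i => v i / x i) with hm
  set Mx : (Fin n → ℝ) → ℝ := fun v => Finset.univ.sup' hne (fun i => v i / x i) with hMx
  have hm_le : ∀ v i, m v * x i ≤ v i := by
    intro v i
    have : m v ≤ v i / x i := Finset.inf'_le _ (Finset.mem_univ i)
    rwa [le_div_iff₀ (hx i)] at this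
  have hM_ge : ∀ v i, v i ≤ Mx v * x i := by
    intro v i
    have : v i / x i ≤ Mx v := Finset.le_sup' (fun i => v i / x i) (Finset.mem_univ i)
    rwa [div_le_iff₀ (hx i)] at this
  have hm_ge : ∀ (v : Fin n → ℝ) (c : ℝ), (∀ i, c * x i ≤ v i) → c ≤ m v := by
    intro v c h
    apply Finset.le_inf'
    intro i _
    rw [le_div_iff₀ (hx i)]
    exact h i
  have hM_le : ∀ (v : Fin n → ℝ) (c : ℝ), (∀ i, v i ≤ c * x i) → Mx v ≤ c := by
    intro v c h
    apply Finset.sup'_le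
    intro i _
    rw [div_le_iff₀ (hx i)]
    exact h i
  -- sequence
  set s : ℕ → Fin n → ℝ := fun k => (A ^ k).mulVec t with hs
  have hstep : ∀ k, s (k + 1) = A.mulVec (s k) := by
    intro k
    rw [hs]
    simp only
    rw [pow_succ', ← Matrix.mulVec_mulVec]
  -- monotone mulVec
  have hmono : ∀ (B : Matrix (Fin n) (Fin n) ℝ), (∀ i j, 0 ≤ B i j) →
      ∀ (p q : Fin n → ℝ), (∀ i, p i ≤ q i) → ∀ i, B.mulVec p i ≤ B.mulVec q i := by
    intro B hB0 p q hpq i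
    simp only [Matrix.mulVec, dotProduct]
    apply Finset.sum_le_sum
    intro j _
    exact mul_le_mul_of_nonneg_left (hpq j) (hB0 i j)
  set al : ℕ → ℝ := fun k => m (s k) / lam ^ k with hal
  set be : ℕ → ℝ := fun k => Mx (s k) / lam ^ k with hbe
  have hlamk : ∀ k : ℕ, (0:ℝ) < lam ^ k := fun k => pow_pos hlam k
  have hmM : ∀ v, m v ≤ Mx v := by
    intro v
    obtain ⟨i⟩ := (inferInstance : Nonempty (Fin n))
    exact le_trans (Finset.inf'_le _ (Finset.mem_univ i))
      (Finset.le_sup' (fun i => v i / x i) (Finset.mem_univ i))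
  have halbe : ∀ k, al k ≤ be k := fun k =>
    div_le_div_of_nonneg_right (hmM (s k)) (hlamk k).le
  -- one-step monotonicity of al and be
  have hstep_low : ∀ k i, lam * m (s k) * x i ≤ s (k + 1) i := by
    intro k i
    have h1 : ∀ j, (m (s k) • x) j ≤ s k j := fun j => by
      simpa using hm_le (s k) j
    have h2 := hmono A hA0 _ _ h1 i
    rw [Matrix.mulVec_smul, hAx] at h2
    simp only [Pi.smul_apply, smul_eq_mul] at h2
    rw [hstep k]
    nlinarith [h2]
  have hstep_high : ∀ k i, s (k + 1) i ≤ lam * Mx (s k) * x i := by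
    intro k i
    have h1 : ∀ j, s k j ≤ (Mx (s k) • x) j := fun j => by
      simpa using hM_ge (s k) j
    have h2 := hmono A hA0 _ _ h1 i
    rw [Matrix.mulVec_smul, hAx] at h2
    simp only [Pi.smul_apply, smul_eq_mul] at h2
    rw [hstep k]
    nlinarith [h2]
  have hal_mono : Monotone al := by
    apply monotone_nat_of_le_succ
    intro k
    have h2 : lam * m (s k) ≤ m (s (k + 1)) := hm_ge _ _ (hstep_low k)
    rw [hal]
    simp only
    rw [div_le_div_iff₀ (hlamk k) (hlamk (k+1)), pow_succ]
    nlinarith [hlamk k]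
  have hbe_anti : Antitone be := by
    apply antitone_nat_of_succ_le
    intro k
    have h2 : Mx (s (k + 1)) ≤ lam * Mx (s k) := hM_le _ _ (hstep_high k)
    rw [hbe]
    simp only
    rw [div_le_div_iff₀ (hlamk (k+1)) (hlamk k), pow_succ]
    nlinarith [hlamk k]
  -- constants
  set B := A ^ K with hBdef
  set dl : ℝ := Finset.univ.inf' hne (fun i => Finset.univ.inf' hne (fun j => B i j)) with hdl
  have hdl_pos : 0 < dl := by
    rw [hdl]
    rw [Finset.lt_inf'_iff]
    intro i _
    rw [Finset.lt_inf'_iff]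
    intro j _
    exact hB i j
  have hdl_le : ∀ i j, dl ≤ B i j := by
    intro i j
    exact le_trans (Finset.inf'_le _ (Finset.mem_univ i)) (Finset.inf'_le _ (Finset.mem_univ j))
  set xmin : ℝ := Finset.univ.inf' hne x with hxmin
  set xmax : ℝ := Finset.univ.sup' hne x with hxmax
  have hxmin_le : ∀ i, xmin ≤ x i := fun i => Finset.inf'_le _ (Finset.mem_univ i)
  have hxmax_ge : ∀ i, x i ≤ xmax := fun i => Finset.le_sup' _ (Finset.mem_univ i)
  have hxmin_pos : 0 < xmin := by
    rw [hxmin, Finset.lt_inf'_iff]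
    intro i _
    exact hx i
  have hxmax_pos : 0 < xmax := lt_of_lt_of_le hxmin_pos (by
    obtain ⟨i⟩ := (inferInstance : Nonempty (Fin n))
    exact le_trans (hxmin_le i) (hxmax_ge i))
  set rho : ℝ := dl * xmin / (lam ^ K * xmax) with hrho
  have hrho_pos : 0 < rho := by
    apply div_pos (mul_pos hdl_pos hxmin_pos) (mul_pos (hlamk K) hxmax_pos)
  -- K-step shift
  have hKstep : ∀ k, s (k + K) = B.mulVec (s k) := by
    intro k
    rw [hs]
    simp only
    rw [add_comm k K, pow_add, ← Matrix.mulVec_mulVec]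
  -- K-step contraction on the al side
  have hcontr : ∀ k, al k + rho * (be k - al k) ≤ al (k + K) := by
    intro k
    obtain ⟨js, _, hjs⟩ := Finset.exists_mem_eq_sup' hne (fun j => s k j / x j)
    have hjs2 : Mx (s k) = s k js / x js := hjs
    have hjs' : s k js = Mx (s k) * x js := by
      rw [hjs2, div_mul_cancel₀ _ (hx js).ne']
    have hkey : ∀ i, (lam ^ K * m (s k) + dl * xmin * (Mx (s k) - m (s k)) / xmax) * x i
        ≤ s (k + K) i := by
      intro i
      have hsum : s (k + K) i = ∑ j, B i j * s k j := by
        rw [hKstep k]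
        rfl
      set w : Fin n → ℝ := fun j => s k j - m (s k) * x j with hw
      have hw0 : ∀ j, 0 ≤ w j := fun j => by
        have := hm_le (s k) j
        simp [hw]
        linarith
      have hsplit : ∑ j, B i j * s k j
          = (∑ j, B i j * (m (s k) * x j)) + ∑ j, B i j * w j := by
        rw [← Finset.sum_add_distrib]
        congr 1
        ext j
        simp [hw]
        ring
      have hfirst : ∑ j, B i j * (m (s k) * x j) = m (s k) * (lam ^ K * x i) := by
        have := congrFun (hpow K) i
        have hmv : ∑ j, B i j * x j = lam ^ K * x i := by
          simpa [Matrix.mulVec, dotProduct] using this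
        calc ∑ j, B i j * (m (s k) * x j) = m (s k) * ∑ j, B i j * x j := by
              rw [Finset.mul_sum]; congr 1; ext j; ring
          _ = m (s k) * (lam ^ K * x i) := by rw [hmv]
      have hsecond : dl * xmin * (Mx (s k) - m (s k)) ≤ ∑ j, B i j * w j := by
        have h1 : B i js * w js ≤ ∑ j, B i j * w j := by
          apply Finset.single_le_sum (f := fun j => B i j * w j) ?_ (Finset.mem_univ js)
          intro j _
          exact mul_nonneg (le_of_lt (hB i j)) (hw0 j)
        have h2 : dl * xmin * (Mx (s k) - m (s k)) ≤ B i js * w js := by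
          have hwjs : w js = (Mx (s k) - m (s k)) * x js := by
            simp [hw, hjs']
            ring
          rw [hwjs]
          have hMm : 0 ≤ Mx (s k) - m (s k) := by linarith [hmM (s k)]
          calc dl * xmin * (Mx (s k) - m (s k))
              ≤ dl * x js * (Mx (s k) - m (s k)) :=
                mul_le_mul_of_nonneg_right
                  (mul_le_mul_of_nonneg_left (hxmin_le js) hdl_pos.le) hMm
            _ ≤ B i js * x js * (Mx (s k) - m (s k)) :=
                mul_le_mul_of_nonneg_right
                  (mul_le_mul_of_nonneg_right (hdl_le i js) (hx js).le) hMm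
            _ = B i js * ((Mx (s k) - m (s k)) * x js) := by ring
        linarith
      have hxile : x i ≤ xmax := hxmax_ge i
      have hMm : 0 ≤ Mx (s k) - m (s k) := by linarith [hmM (s k)]
      have hterm : dl * xmin * (Mx (s k) - m (s k)) / xmax * x i
          ≤ dl * xmin * (Mx (s k) - m (s k)) := by
        rw [div_mul_eq_mul_div, div_le_iff₀ hxmax_pos]
        nlinarith [mul_nonneg (mul_nonneg hdl_pos.le hxmin_pos.le) hMm, hx i]
      rw [hsum, hsplit, hfirst]
      have := hsecond
      nlinarith [hterm]
    have h2 : lam ^ K * m (s k) + dl * xmin * (Mx (s k) - m (s k)) / xmax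
        ≤ m (s (k + K)) := hm_ge _ _ hkey
    rw [hal, hbe]
    simp only
    have hid : m (s k) / lam ^ k + rho * (Mx (s k) / lam ^ k - m (s k) / lam ^ k)
        = (lam ^ K * m (s k) + dl * xmin * (Mx (s k) - m (s k)) / xmax) / lam ^ (k + K) := by
      rw [hrho, pow_add]
      field_simp
    rw [hid]
    exact div_le_div_of_nonneg_right h2 (hlamk (k + K)).le
  -- limits of al and be
  have hbddA : BddAbove (Set.range al) := by
    refine ⟨be 0, ?_⟩
    rintro _ ⟨k, rfl⟩
    exact (halbe k).trans (hbe_anti (Nat.zero_le k))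
  have hbddB : BddBelow (Set.range be) := by
    refine ⟨al 0, ?_⟩
    rintro _ ⟨k, rfl⟩
    exact (hal_mono (Nat.zero_le k)).trans (halbe k)
  set a : ℝ := ⨆ k, al k with ha
  set b : ℝ := ⨅ k, be k with hb
  have hta : Tendsto al atTop (nhds a) := tendsto_atTop_ciSup hal_mono hbddA
  have htb : Tendsto be atTop (nhds b) := tendsto_atTop_ciInf hbe_anti hbddB
  have hale : ∀ k, al k ≤ a := fun k => le_ciSup hbddA k
  have halbek : ∀ k j, al k ≤ be j := by
    intro k j
    rcases le_total k j with h | h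
    · exact (hal_mono h).trans (halbe j)
    · exact (halbe k).trans (hbe_anti h)
  have habe : ∀ k, a ≤ be k := fun k => ciSup_le (fun j => halbek j k)
  have hab : a ≤ b := le_ciInf habe
  have hba : b ≤ a := by
    have h1 : Tendsto (fun k => al (k + K)) atTop (nhds a) :=
      hta.comp (tendsto_add_atTop_nat K)
    have h2 : Tendsto (fun k => al k + rho * (be k - al k)) atTop
        (nhds (a + rho * (b - a))) := by
      exact hta.add (((htb.sub hta).const_mul rho))
    have h3 : a + rho * (b - a) ≤ a := le_of_tendsto_of_tendsto' h2 h1 hcontr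
    nlinarith
  have hba' : b = a := le_antisymm hba hab
  have hd0 : Tendsto (fun k => be k - al k) atTop (nhds 0) := by
    have := htb.sub hta
    rwa [hba', sub_self] at this
  have ha_pos : 0 < a := by
    have h1 : 0 < al 0 := by
      rw [hal]
      simp only [pow_zero, div_one]
      rw [hm, Finset.lt_inf'_iff]
      intro i _
      · have h := div_pos (by simpa [hs] using ht i) (hx i)
        simpa [hs] using h
    exact lt_of_lt_of_le h1 (hale 0)
  have hd_nonneg : ∀ k, 0 ≤ be k - al k := fun k => by linarith [halbe k]
  -- normalized vectors
  set u : ℕ → Fin n → ℝ := fun k => (lam ^ k)⁻¹ • s k with hu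
  have hu_eq : ∀ k i, u k i = s k i / lam ^ k := by
    intro k i
    rw [hu]
    simp [div_eq_inv_mul]
  have hu_le : ∀ k i, al k * x i ≤ u k i := by
    intro k i
    rw [hu_eq, hal]
    simp only
    rw [div_mul_eq_mul_div, div_le_div_iff₀ (hlamk k) (hlamk k)]
    exact mul_le_mul_of_nonneg_right (hm_le (s k) i) (hlamk k).le
  have hu_ge : ∀ k i, u k i ≤ be k * x i := by
    intro k i
    rw [hu_eq, hbe]
    simp only
    rw [div_mul_eq_mul_div, div_le_div_iff₀ (hlamk k) (hlamk k)]
    exact mul_le_mul_of_nonneg_right (hM_ge (s k) i) (hlamk k).le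
  have hu_abs : ∀ k i, |u k i - a * x i| ≤ (be k - al k) * x i := by
    intro k i
    rw [abs_le]
    constructor
    · have h1 := hu_le k i
      have h2 : a * x i ≤ be k * x i := mul_le_mul_of_nonneg_right (habe k) (hx i).le
      have h3 : (be k - al k) * x i = be k * x i - al k * x i := by ring
      linarith
    · have h1 := hu_ge k i
      have h2 : al k * x i ≤ a * x i := mul_le_mul_of_nonneg_right (hale k) (hx i).le
      have h3 : (be k - al k) * x i = be k * x i - al k * x i := by ring
      linarith
  set C : ℝ := ∑ i, x i * nrm (Pi.single i 1) with hC
  have hC_nonneg : 0 ≤ C := Finset.sum_nonneg fun i _ =>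
    mul_nonneg (hx i).le (hnonneg _)
  have hdiff : ∀ k, nrm (u k - a • x) ≤ (be k - al k) * C := by
    intro k
    have hexp : u k - a • x = ∑ i, (u k i - a * x i) • (Pi.single i 1 : Fin n → ℝ) := by
      ext j
      rw [Finset.sum_apply]
      simp [Pi.single_apply]
    rw [hexp]
    calc nrm (∑ i, (u k i - a * x i) • (Pi.single i 1 : Fin n → ℝ))
        ≤ ∑ i, nrm ((u k i - a * x i) • (Pi.single i 1 : Fin n → ℝ)) :=
          nrm_sum_le nrm h0 htri _ _
      _ = ∑ i, |u k i - a * x i| * nrm (Pi.single i 1 : Fin n → ℝ) := by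
          congr 1; ext i; exact hhom _ _
      _ ≤ ∑ i, ((be k - al k) * x i) * nrm (Pi.single i 1 : Fin n → ℝ) := by
          apply Finset.sum_le_sum
          intro i _
          exact mul_le_mul_of_nonneg_right (hu_abs k i) (hnonneg _)
      _ = (be k - al k) * C := by
          rw [hC, Finset.mul_sum]
          congr 1; ext i; ring
  -- convergence of nrm (u k)
  have hxne : x ≠ 0 := by
    intro h
    have := hx ⟨0, npos⟩
    rw [h] at this
    simp at this
  have hnx_pos : 0 < nrm x := by
    rcases lt_or_eq_of_le (hnonneg x) with h | h
    · exact h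
    · exact absurd ((hdef x).1 h.symm) hxne
  set L : ℝ := a * nrm x with hL
  have hL_pos : 0 < L := mul_pos ha_pos hnx_pos
  have hrev : ∀ v w : Fin n → ℝ, |nrm v - nrm w| ≤ nrm (v - w) := by
    intro v w
    rw [abs_le]
    constructor
    · have h1 := htri (w - v) v
      rw [sub_add_cancel] at h1
      have h2 : nrm (w - v) = nrm (v - w) := by
        rw [← hneg (v - w)]
        congr 1
        abel
      linarith
    · have h1 := htri (v - w) w
      rw [sub_add_cancel] at h1
      linarith
  have hnL : nrm (a • x) = L := by
    rw [hhom, abs_of_pos ha_pos, hL]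
  have htu : Tendsto (fun k => nrm (u k)) atTop (nhds L) := by
    rw [tendsto_iff_dist_tendsto_zero]
    apply squeeze_zero (fun k => dist_nonneg) (g := fun k => (be k - al k) * C)
    · intro k
      rw [Real.dist_eq]
      calc |nrm (u k) - L| = |nrm (u k) - nrm (a • x)| := by rw [hnL]
        _ ≤ nrm (u k - a • x) := hrev _ _
        _ ≤ (be k - al k) * C := hdiff k
    · have := hd0.mul_const C
      simpa using this
  -- final assembly
  have hnrm_s : ∀ k, nrm (s k) = lam ^ k * nrm (u k) := by
    intro k
    have : s k = (lam ^ k) • u k := by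
      rw [hu]
      simp only
      rw [smul_smul]
      rw [mul_inv_cancel₀ (hlamk k).ne', one_smul]
    conv_lhs => rw [this]
    rw [hhom, abs_of_pos (hlamk k)]
  have htu' : Tendsto (fun k => nrm (u (k + 1))) atTop (nhds L) :=
    htu.comp (tendsto_add_atTop_nat 1)
  have hfinal : Tendsto (fun k => lam * (nrm (u (k + 1)) / nrm (u k))) atTop
      (nhds (lam * (L / L))) :=
    (htu'.div htu hL_pos.ne').const_mul lam
  rw [div_self hL_pos.ne', mul_one] at hfinal
  apply hfinal.congr
  intro k
  have : nrm (s (k + 1)) / nrm (s k) = lam * (nrm (u (k + 1)) / nrm (u k)) := by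
    rw [hnrm_s, hnrm_s, pow_succ, mul_assoc,
      mul_div_mul_left _ _ (hlamk k).ne', mul_div_assoc]
  rw [← this]

end Aux

/-- Perron ratio limit: if `A` is primitive with Perron eigenvalue `λ > 0` and
strictly positive right and left eigenvectors `x` and `y`, then for every
nonnegative nonzero vector `t` and any norm `‖·‖` on `ℝ^n`,
`‖A^(k+1) t‖ / ‖A^k t‖ → λ` as `k → ∞`. -/
theorem perron_ratio_limit (n : ℕ) (A : Matrix (Fin n) (Fin n) ℝ) (lam : ℝ)
    (x y : Fin n → ℝ)
    (hA0 : ∀ i j, 0 ≤ A i j)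
    (hprim : ∃ K : ℕ, 1 ≤ K ∧ ∀ i j, 0 < (A ^ K) i j)
    (hlam : 0 < lam)
    (hx : ∀ i, 0 < x i) (hy : ∀ i, 0 < y i)
    (hAx : A.mulVec x = lam • x) (hAy : Aᵀ.mulVec y = lam • y)
    (t : Fin n → ℝ) (ht0 : ∀ i, 0 ≤ t i) (htne : t ≠ 0)
    (nrm : (Fin n → ℝ) → ℝ)
    (hdef : ∀ v, nrm v = 0 ↔ v = 0)
    (hhom : ∀ (a : ℝ) (v : Fin n → ℝ), nrm (a • v) = |a| * nrm v)
    (htri : ∀ v w, nrm (v + w) ≤ nrm v + nrm w) :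
    Tendsto (fun k : ℕ => nrm ((A ^ (k + 1)).mulVec t) / nrm ((A ^ k).mulVec t))
      atTop (nhds lam) := by
  classical
  rcases Nat.eq_zero_or_pos n with hn | hn
  · exfalso
    apply htne
    subst hn
    funext i
    exact i.elim0
  obtain ⟨K, hK, hBpos⟩ := hprim
  set t' := (A ^ K).mulVec t with ht'
  have ht'pos : ∀ i, 0 < t' i := by
    intro i
    obtain ⟨j0, hj0⟩ : ∃ j, t j ≠ 0 := by
      by_contra h
      push_neg at h
      exact htne (funext h)
    have hj0' : 0 < t j0 := lt_of_le_of_ne (ht0 j0) (Ne.symm hj0)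
    rw [ht']
    show (0:ℝ) < ∑ j, (A ^ K) i j * t j
    apply Finset.sum_pos'
    · intro j _
      exact mul_nonneg (hBpos i j).le (ht0 j)
    · exact ⟨j0, Finset.mem_univ j0, mul_pos (hBpos i j0) hj0'⟩
  have haux := perron_aux hn A lam x K hA0 hBpos hlam hx hAx t' ht'pos nrm hdef hhom htri
  rw [← tendsto_add_atTop_iff_nat K]
  apply haux.congr
  intro k
  have he : ∀ m : ℕ, (A ^ m).mulVec t' = (A ^ (m + K)).mulVec t := by
    intro m
    rw [ht', Matrix.mulVec_mulVec, ← pow_add]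
  rw [he, he]
  have h1 : k + 1 + K = k + K + 1 := by ring
  rw [h1]
end
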